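/- arXiv:2512.08369 — 8 statements merged into one kernel-verified Lean document; each statement's English description precedes it below -/
import Mathlib

section
/- Let A be an infinite lower triangular matrix with nonzero diagonal entries and let Q(A) = A · diag(1, A^{-1}) be its left production matrix. If Q(A) is totally positive, then A is totally positive. -/
/-- An infinite real matrix is totally positive if all its minors are nonnegative. -/
def TotallyPos (A : ℕ → ℕ → ℝ) : Prop :=
  ∀ (k : ℕ) (f g : Fin k → ℕ), StrictMono f → StrictMono g →
    0 ≤ Matrix.det (Matrix.of fun i j : Fin k => A (f i) (g j))

/-- `blockOne M = blockdiag(1, M)`: a `1` in position `(0,0)` and `M` shifted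
down-right by one. -/
def blockOne (M : ℕ → ℕ → ℝ) : ℕ → ℕ → ℝ :=
  fun i k =>
    if i = 0 then (if k = 0 then 1 else 0)
    else if k = 0 then 0 else M (i - 1) (k - 1)

open Finset Matrix

private lemma det_mul_expand {k m : ℕ} (M : Matrix (Fin k) (Fin m) ℝ)
    (N : Matrix (Fin m) (Fin k) ℝ) :
    (M * N).det = ∑ h : Fin k → Fin m, (∏ i, M i (h i)) * (N.submatrix h id).det := by
  have h1 : M * N = Matrix.of fun i => ∑ x : Fin m, M i x • N x := by
    ext i j; simp [Matrix.mul_apply]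
  rw [h1]
  have h2 : (Matrix.of fun i => ∑ x : Fin m, M i x • N x).det
      = (Matrix.detRowAlternating : (Fin k → ℝ) [⋀^Fin k]→ₗ[ℝ] ℝ).toMultilinearMap
          (fun i => ∑ x : Fin m, M i x • N x) := rfl
  rw [h2, MultilinearMap.map_sum]
  refine Finset.sum_congr rfl fun r _ => ?_
  have h3 := MultilinearMap.map_smul_univ
    (Matrix.detRowAlternating : (Fin k → ℝ) [⋀^Fin k]→ₗ[ℝ] ℝ).toMultilinearMap
    (fun i => M i (r i)) (fun i => N (r i))
  have h4 : (Matrix.detRowAlternating : (Fin k → ℝ) [⋀^Fin k]→ₗ[ℝ] ℝ).toMultilinearMap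
      (fun i => N (r i)) = (N.submatrix r id).det := rfl
  rw [h3, h4]
  simp [smul_eq_mul]

private lemma sortPerm_bij {k m : ℕ} :
    Function.Bijective (fun p : {h0 : Fin k → Fin m // StrictMono h0} × Equiv.Perm (Fin k) =>
      (⟨p.1.1 ∘ p.2, p.1.2.injective.comp p.2.injective⟩ :
        {h : Fin k → Fin m // Function.Injective h})) := by
  constructor
  · rintro ⟨⟨f, hf⟩, σ⟩ ⟨⟨g, hg⟩, τ⟩ hEq
    have h1 : f ∘ σ = g ∘ τ := congrArg Subtype.val hEq
    have hr : Set.range f = Set.range g := by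
      have h2 : Set.range (f ∘ σ) = Set.range (g ∘ τ) := by rw [h1]
      rwa [Set.range_comp, Set.range_comp, Equiv.range_eq_univ, Equiv.range_eq_univ,
        Set.image_univ, Set.image_univ] at h2
    haveI : WellFoundedLT (Fin k) := Finite.to_wellFoundedLT
    have hfg : f = g := by
      have := StrictMono.range_inj (β := Fin k) (γ := Fin m) hf hg
      exact this.mp hr
    subst hfg
    have hστ : σ = τ := Equiv.ext fun i => hf.injective (congrFun h1 i)
    simp [hστ]
  · rintro ⟨h, hinj⟩
    set s : Finset (Fin m) := Finset.image h Finset.univ with hs_def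
    have hs : s.card = k := by
      rw [hs_def, Finset.card_image_of_injective _ hinj, Finset.card_univ, Fintype.card_fin]
    have hmem : ∀ i, h i ∈ s := fun i => Finset.mem_image_of_mem _ (Finset.mem_univ i)
    set φ : Fin k → Fin k := fun i => (s.orderIsoOfFin hs).symm ⟨h i, hmem i⟩ with hφ_def
    have hφinj : Function.Injective φ := by
      intro a b hab
      have h2 : ((s.orderIsoOfFin hs) (φ a) : Fin m) = ((s.orderIsoOfFin hs) (φ b) : Fin m) :=
        congrArg (fun x => ((s.orderIsoOfFin hs) x : Fin m)) hab
      rw [hφ_def] at h2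
      simp only [OrderIso.apply_symm_apply] at h2
      exact hinj h2
    refine ⟨⟨⟨fun i => s.orderEmbOfFin hs i, (s.orderEmbOfFin hs).strictMono⟩,
      Equiv.ofBijective φ (Finite.injective_iff_bijective.mp hφinj)⟩, ?_⟩
    refine Subtype.ext (funext fun i => ?_)
    show s.orderEmbOfFin hs (φ i) = h i
    rw [hφ_def, ← Finset.coe_orderIsoOfFin_apply, OrderIso.apply_symm_apply]

private lemma det_eq_sum_perm {k : ℕ} (X : Matrix (Fin k) (Fin k) ℝ) :
    X.det = ∑ σ : Equiv.Perm (Fin k), (Equiv.Perm.sign σ : ℝ) * ∏ i, X i (σ i) := by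
  rw [← Matrix.det_transpose, Matrix.det_apply']
  refine Finset.sum_congr rfl fun σ _ => ?_
  simp [Matrix.transpose_apply]

private lemma det_mul_nonneg_of_minors {k m : ℕ} (M : Matrix (Fin k) (Fin m) ℝ)
    (N : Matrix (Fin m) (Fin k) ℝ)
    (hM : ∀ h : Fin k → Fin m, StrictMono h → 0 ≤ (M.submatrix id h).det)
    (hN : ∀ h : Fin k → Fin m, StrictMono h → 0 ≤ (N.submatrix h id).det) :
    0 ≤ (M * N).det := by
  classical
  rw [det_mul_expand]
  set F : (Fin k → Fin m) → ℝ := fun h => (∏ i, M i (h i)) * (N.submatrix h id).det with hF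
  have hvanish : ∀ h : Fin k → Fin m, ¬ Function.Injective h → F h = 0 := by
    intro h hh
    simp only [Function.Injective] at hh; push_neg at hh
    obtain ⟨a, b, hab, hne⟩ := hh
    have hz : (N.submatrix h id).det = 0 :=
      Matrix.det_zero_of_row_eq hne (by funext j; simp [Matrix.submatrix_apply, hab])
    simp [hF, hz]
  have step1 : ∑ h : Fin k → Fin m, F h
      = ∑ h ∈ Finset.univ.filter (fun h : Fin k → Fin m => Function.Injective h), F h := by
    rw [← Finset.sum_filter_add_sum_filter_not Finset.univ
      (fun h : Fin k → Fin m => Function.Injective h) F]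
    have : ∑ h ∈ Finset.univ.filter
        (fun h : Fin k → Fin m => ¬ Function.Injective h), F h = 0 :=
      Finset.sum_eq_zero fun h hh => hvanish h (Finset.mem_filter.mp hh).2
    rw [this, add_zero]
  have step2 : ∑ h ∈ Finset.univ.filter (fun h : Fin k → Fin m => Function.Injective h), F h
      = ∑ h : {h : Fin k → Fin m // Function.Injective h}, F h.1 :=
    Finset.sum_subtype _ (by simp) F
  have step3 : ∑ h : {h : Fin k → Fin m // Function.Injective h}, F h.1
      = ∑ p : {h0 : Fin k → Fin m // StrictMono h0} × Equiv.Perm (Fin k), F (p.1.1 ∘ p.2) :=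
    (Fintype.sum_bijective _ sortPerm_bij (fun p => F (p.1.1 ∘ p.2)) (fun h => F h.1)
      (fun p => rfl)).symm
  rw [step1, step2, step3, Fintype.sum_prod_type]
  refine Finset.sum_nonneg fun h0 _ => ?_
  have inner : ∀ σ : Equiv.Perm (Fin k), F (h0.1 ∘ σ)
      = ((Equiv.Perm.sign σ : ℝ) * ∏ i, M i (h0.1 (σ i))) * (N.submatrix h0.1 id).det := by
    intro σ
    have hsub : N.submatrix (h0.1 ∘ σ) id = (N.submatrix h0.1 id).submatrix σ id := rfl
    rw [hF]
    simp only [hsub, Matrix.det_permute, Function.comp]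
    ring
  calc (0:ℝ) ≤ (M.submatrix id h0.1).det * (N.submatrix h0.1 id).det :=
        mul_nonneg (hM h0.1 h0.2) (hN h0.1 h0.2)
    _ = ∑ σ : Equiv.Perm (Fin k), F (h0.1 ∘ σ) := by
        rw [det_eq_sum_perm (M.submatrix id h0.1), Finset.sum_mul]
        refine Finset.sum_congr rfl fun σ _ => ?_
        rw [inner σ]
        simp [Matrix.submatrix_apply]

private lemma blockOne_minor_nonneg (A : ℕ → ℕ → ℝ) (N : ℕ)
    (IH : ∀ (k : ℕ) (f g : Fin k → ℕ), StrictMono f → StrictMono g → (∀ i, f i < N) →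
      0 ≤ (Matrix.of fun i j : Fin k => A (f i) (g j)).det) :
    ∀ (k : ℕ) (h g : Fin k → ℕ), StrictMono h → StrictMono g → (∀ i, h i ≤ N) →
      0 ≤ (Matrix.of fun i j : Fin k => blockOne A (h i) (g j)).det := by
  intro k h g hh hg hbound
  match k with
  | 0 => simp [Matrix.det_fin_zero]
  | k+1 =>
    by_cases hh0 : h 0 = 0
    · by_cases hg0 : g 0 = 0
      · -- expand along row 0
        rw [Matrix.det_succ_row_zero]
        have hrow : ∀ j : Fin (k+1),
            (Matrix.of fun i j : Fin (k+1) => blockOne A (h i) (g j)) 0 j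
              = if j = 0 then 1 else 0 := by
          intro j
          by_cases hj : j = 0
          · simp [hj, blockOne, hh0, hg0]
          · have hgj : g j ≠ 0 := by
              have : g 0 < g j := hg (Fin.pos_of_ne_zero hj)
              omega
            simp [hj, blockOne, hh0, hgj]
        rw [Finset.sum_eq_single_of_mem (0 : Fin (k+1)) (Finset.mem_univ _)
          (fun j _ hj => by rw [hrow j, if_neg hj]; ring)]
        rw [hrow 0, if_pos rfl]
        simp only [Fin.val_zero, pow_zero, one_mul, Fin.succAbove_zero]
        have hpos : ∀ i : Fin k, h i.succ ≠ 0 := by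
          intro i
          have : h 0 < h i.succ := hh (Fin.succ_pos i)
          omega
        have hgpos : ∀ j : Fin k, g j.succ ≠ 0 := by
          intro j
          have : g 0 < g j.succ := hg (Fin.succ_pos j)
          omega
        have heq : ((Matrix.of fun i j : Fin (k+1) => blockOne A (h i) (g j)).submatrix
            Fin.succ Fin.succ)
            = Matrix.of fun i j : Fin k => A (h i.succ - 1) (g j.succ - 1) := by
          ext i j
          simp [blockOne, hpos i, hgpos j]
        rw [heq]
        refine IH k _ _ ?_ ?_ ?_
        · intro a b hab
          show h a.succ - 1 < h b.succ - 1
          have h1 := hh (Fin.succ_lt_succ_iff.mpr hab)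
          have h2 := hpos a
          omega
        · intro a b hab
          show g a.succ - 1 < g b.succ - 1
          have h1 := hg (Fin.succ_lt_succ_iff.mpr hab)
          have h2 := hgpos a
          omega
        · intro i
          show h i.succ - 1 < N
          have h1 := hbound i.succ
          have h2 := hpos i
          omega
      · -- row 0 is zero
        have : ∀ j, (Matrix.of fun i j : Fin (k+1) => blockOne A (h i) (g j)) 0 j = 0 := by
          intro j
          have hgj : g j ≠ 0 := by
            have : g 0 ≤ g j := hg.monotone (Fin.zero_le j)
            omega
          simp [blockOne, hh0, hgj]
        rw [Matrix.det_eq_zero_of_row_eq_zero 0 this]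
    · by_cases hg0 : g 0 = 0
      · -- column 0 is zero
        have : ∀ i, (Matrix.of fun i j : Fin (k+1) => blockOne A (h i) (g j)) i 0 = 0 := by
          intro i
          have hhi : h i ≠ 0 := by
            have : h 0 ≤ h i := hh.monotone (Fin.zero_le i)
            omega
          simp [blockOne, hhi, hg0]
        rw [Matrix.det_eq_zero_of_column_eq_zero 0 this]
      · have hhi : ∀ i : Fin (k+1), h i ≠ 0 := by
          intro i
          have : h 0 ≤ h i := hh.monotone (Fin.zero_le i)
          omega
        have hgj : ∀ j : Fin (k+1), g j ≠ 0 := by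
          intro j
          have : g 0 ≤ g j := hg.monotone (Fin.zero_le j)
          omega
        have heq : (Matrix.of fun i j : Fin (k+1) => blockOne A (h i) (g j))
            = Matrix.of fun i j : Fin (k+1) => A (h i - 1) (g j - 1) := by
          ext i j
          simp [blockOne, hhi i, hgj j]
        rw [heq]
        refine IH (k+1) _ _ ?_ ?_ ?_
        · intro a b hab
          show h a - 1 < h b - 1
          have h1 := hh hab
          have h2 := hhi a
          omega
        · intro a b hab
          show g a - 1 < g b - 1
          have h1 := hg hab
          have h2 := hgj a
          omega
        · intro i
          show h i - 1 < N
          have h1 := hbound i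
          have h2 := hhi i
          omega

/-- Let `A` be lower triangular with nonzero diagonal and `Q` its left
production matrix, i.e. `A = Q ⬝ blockdiag(1, A)` (equivalently
`Q = A ⬝ blockdiag(1, A⁻¹)`). If `Q` is totally positive then so is `A`. -/
theorem totallyPos_of_leftProduction (A Q : ℕ → ℕ → ℝ)
    (hAtri : ∀ n k, n < k → A n k = 0) (hdiag : ∀ n, A n n ≠ 0)
    (hQtri : ∀ n k, n < k → Q n k = 0)
    (hprod : ∀ n k, A n k = ∑ i ∈ Finset.range (n + 1), Q n i * blockOne A i k)
    (hQ : TotallyPos Q) :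
    TotallyPos A := by
  have key : ∀ N (k : ℕ) (f g : Fin k → ℕ), StrictMono f → StrictMono g → (∀ i, f i < N) →
      0 ≤ (Matrix.of fun i j : Fin k => A (f i) (g j)).det := by
    intro N
    induction N using Nat.strong_induction_on with
    | _ N IHN =>
      intro k f g hf hg hfN
      match k with
      | 0 => simp [Matrix.det_fin_zero]
      | k+1 =>
        have hN1 : 1 ≤ N := Nat.lt_of_le_of_lt (Nat.zero_le _) (hfN 0)
        set M : Matrix (Fin (k+1)) (Fin N) ℝ :=
          Matrix.of fun i x => Q (f i) (x : ℕ) with hM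
        set B : Matrix (Fin N) (Fin (k+1)) ℝ :=
          Matrix.of fun x j => blockOne A (x : ℕ) (g j) with hB
        have hAB : (Matrix.of fun i j : Fin (k+1) => A (f i) (g j)) = M * B := by
          ext i j
          rw [Matrix.mul_apply]
          simp only [hM, hB, Matrix.of_apply]
          rw [Fin.sum_univ_eq_sum_range (fun x => Q (f i) x * blockOne A x (g j)) N]
          rw [hprod (f i) (g j)]
          refine Finset.sum_subset ?_ ?_
          · exact Finset.range_subset_range.mpr (hfN i)
          · intro x _ hx
            have : f i < x := by
              simp only [Finset.mem_range] at hx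
              omega
            rw [hQtri _ _ this, zero_mul]
        rw [hAB]
        refine det_mul_nonneg_of_minors M B ?_ ?_
        · intro hfun hmono
          have hcoe : StrictMono (fun j => ((hfun j : ℕ))) := fun a b hab => hmono hab
          exact hQ (k+1) f (fun j => (hfun j : ℕ)) hf hcoe
        · intro hfun hmono
          have hcoe : StrictMono (fun x => ((hfun x : ℕ))) := fun a b hab => hmono hab
          have IH' : ∀ (k : ℕ) (f g : Fin k → ℕ), StrictMono f → StrictMono g →
              (∀ i, f i < N - 1) →
              0 ≤ (Matrix.of fun i j : Fin k => A (f i) (g j)).det :=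
            IHN (N - 1) (by omega)
          have hbound : ∀ x, (hfun x : ℕ) ≤ N - 1 := by
            intro x
            have := (hfun x).isLt
            omega
          exact blockOne_minor_nonneg A (N - 1) IH' (k+1)
            (fun x => (hfun x : ℕ)) g hcoe hg hbound
  intro k f g hf hg
  exact key ((Finset.univ.sup f) + 1) k f g hf hg
    (fun i => Nat.lt_succ_of_le (Finset.le_sup (Finset.mem_univ i)))
end

section
/- Let A be a lower triangular matrix with left production matrix Q = Q(A), and for n, r ≥ 0 define M_{n,r} as the product of the r+1 matrices blockdiag(I_j, Q_n, I_{r-j}) for j = 0, 1, …, r, where Q_n is the leading principal submatrix of Q of order n+1. Then the transpose of the r-th leading principal Toeplitz matrix of the n-th row of A equals the submatrix of M_{n,r} with rows n, n+1, …, n+r and columns 0, 1, …, r. -/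
/-- Product of infinite matrices (well-defined when the first factor is
lower triangular). -/
def matMul (A B : ℕ → ℕ → ℝ) : ℕ → ℕ → ℝ :=
  fun n k => ∑ i ∈ Finset.range (n + 1), A n i * B i k

/-- The factor `blockdiag(I_j, Q_n, I)`: the leading principal submatrix `Q_n`
of `Q` (of order `n+1`) placed in rows and columns `j,…,j+n`, identity elsewhere. -/
def blockFactor (Q : ℕ → ℕ → ℝ) (n j : ℕ) : ℕ → ℕ → ℝ :=
  fun i k =>
    if j ≤ i ∧ i ≤ j + n then (if j ≤ k ∧ k ≤ j + n then Q (i - j) (k - j) else 0)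
    else if i = k then 1 else 0

/-- `M_{n,r} = blockdiag(I_0,Q_n,I_r) ⬝ blockdiag(I_1,Q_n,I_{r-1}) ⬝ ⋯ ⬝ blockdiag(I_r,Q_n,I_0)`. -/
def Mmat (Q : ℕ → ℕ → ℝ) (n r : ℕ) : ℕ → ℕ → ℝ :=
  (List.range (r + 1)).foldr (fun j acc => matMul (blockFactor Q n j) acc)
    (fun i k => if i = k then 1 else 0)

lemma blockOne_id :
    blockOne (fun i k => if i = k then (1:ℝ) else 0)
      = (fun i k => if i = k then (1:ℝ) else 0) := by
  funext i k
  cases i with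
  | zero => simp [blockOne, eq_comm]
  | succ i =>
    cases k with
    | zero => simp [blockOne]
    | succ k => simp [blockOne]

lemma blockOne_matMul (X Y : ℕ → ℕ → ℝ) :
    blockOne (matMul X Y) = matMul (blockOne X) (blockOne Y) := by
  funext i k
  cases i with
  | zero =>
    simp [blockOne, matMul]
  | succ i =>
    have h0 : blockOne X (i+1) 0 = 0 := by simp [blockOne]
    conv_rhs => rw [matMul, Finset.sum_range_succ']
    rw [h0, zero_mul, add_zero]
    cases k with
    | zero =>
      have hY : ∀ t, blockOne Y (t+1) 0 = 0 := by intro t; simp [blockOne]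
      simp [blockOne, hY]
    | succ k =>
      have hL : blockOne (matMul X Y) (i+1) (k+1) = matMul X Y i k := by
        simp [blockOne]
      rw [hL, matMul]
      refine Finset.sum_congr rfl ?_
      intro t _
      simp [blockOne]

lemma blockFactor_succ (Q : ℕ → ℕ → ℝ) (n j : ℕ) :
    blockFactor Q n (j+1) = blockOne (blockFactor Q n j) := by
  funext i k
  cases i with
  | zero =>
    have : ¬ (j + 1 ≤ 0 ∧ 0 ≤ j + 1 + n) := by omega
    simp [blockFactor, blockOne, this, eq_comm]
  | succ i =>
    cases k with
    | zero =>
      have h1 : ¬ (j + 1 ≤ 0 ∧ (0:ℕ) ≤ j + 1 + n) := by omega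
      simp only [blockOne, Nat.succ_ne_zero, if_neg, if_false, blockFactor, h1]
      by_cases h : j + 1 ≤ i + 1 ∧ i + 1 ≤ j + 1 + n
      · simp [h]
      · simp [h]
    | succ k =>
      simp only [blockOne, Nat.succ_ne_zero, if_neg, if_false, Nat.add_sub_cancel,
        blockFactor]
      have h1 : (j + 1 ≤ i + 1 ∧ i + 1 ≤ j + 1 + n) ↔ (j ≤ i ∧ i ≤ j + n) := by omega
      have h2 : (j + 1 ≤ k + 1 ∧ k + 1 ≤ j + 1 + n) ↔ (j ≤ k ∧ k ≤ j + n) := by omega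
      have h3 : i + 1 - (j + 1) = i - j := by omega
      have h4 : k + 1 - (j + 1) = k - j := by omega
      have h5 : (i + 1 = k + 1) ↔ (i = k) := by omega
      simp only [h1, h2, h3, h4, h5]

lemma Mmat_succ (Q : ℕ → ℕ → ℝ) (n r : ℕ) :
    Mmat Q n (r+1) = matMul (blockFactor Q n 0) (blockOne (Mmat Q n r)) := by
  have key : ∀ l : List ℕ,
      l.foldr (fun j acc => matMul (blockFactor Q n (j+1)) acc)
        (fun i k => if i = k then (1:ℝ) else 0)
      = blockOne (l.foldr (fun j acc => matMul (blockFactor Q n j) acc)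
        (fun i k => if i = k then (1:ℝ) else 0)) := by
    intro l
    induction l with
    | nil => exact blockOne_id.symm
    | cons a t ih =>
      simp only [List.foldr_cons]
      rw [ih, blockFactor_succ, blockOne_matMul]
  unfold Mmat
  rw [List.range_succ_eq_map, List.foldr_cons, List.foldr_map]
  simp only [Nat.succ_eq_add_one]
  rw [key]

lemma Mmat_zero (Q : ℕ → ℕ → ℝ) (n : ℕ) :
    Mmat Q n 0 = matMul (blockFactor Q n 0)
      (fun i k => if i = k then (1:ℝ) else 0) := by
  unfold Mmat
  simp [List.range_succ]

lemma aux (A Q : ℕ → ℕ → ℝ)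
    (hprod : ∀ n k, A n k = ∑ i ∈ Finset.range (n + 1), Q n i * blockOne A i k)
    (n : ℕ) :
    ∀ r : ℕ, (∀ m ≤ n, ∀ j ≤ r, Mmat Q n r m j = A m j) ∧
      (∀ i ≤ r, ∀ j ≤ r, Mmat Q n r (n + i) j = if i ≤ j then A n (j - i) else 0) := by
  intro r
  induction r with
  | zero =>
    have h1 : ∀ m ≤ n, ∀ j ≤ 0, Mmat Q n 0 m j = A m j := by
      intro m hm j hj
      interval_cases j
      rw [Mmat_zero, matMul]
      have : ∀ t ∈ Finset.range (m+1),
          blockFactor Q n 0 m t * (if t = 0 then (1:ℝ) else 0)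
          = if t = 0 then blockFactor Q n 0 m 0 else 0 := by
        intro t _
        by_cases h : t = 0 <;> simp [h]
      rw [Finset.sum_congr rfl this, Finset.sum_ite_eq']
      have hb : blockFactor Q n 0 m 0 = Q m 0 := by
        simp only [blockFactor]
        rw [if_pos (show 0 ≤ m ∧ m ≤ 0 + n by omega),
          if_pos (show (0:ℕ) ≤ 0 ∧ (0:ℕ) ≤ 0 + n by omega)]
        simp
      rw [hprod m 0]
      have : ∀ t ∈ Finset.range (m+1),
          Q m t * blockOne A t 0 = if t = 0 then Q m 0 else 0 := by
        intro t _
        cases t with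
        | zero => simp [blockOne]
        | succ t => simp [blockOne]
      rw [Finset.sum_congr rfl this, Finset.sum_ite_eq']
      simp [hb]
    refine ⟨h1, ?_⟩
    intro i hi j hj
    interval_cases i
    interval_cases j
    simpa using (h1 n le_rfl 0 le_rfl)
  | succ r ih =>
    have h1 : ∀ m ≤ n, ∀ j ≤ r + 1, Mmat Q n (r+1) m j = A m j := by
      intro m hm j hj
      rw [Mmat_succ, matMul, hprod m j]
      refine (Finset.sum_congr rfl ?_).symm
      intro t ht
      simp only [Finset.mem_range] at ht
      have hb : blockFactor Q n 0 m t = Q m t := by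
        simp only [blockFactor]
        rw [if_pos (show 0 ≤ m ∧ m ≤ 0 + n by omega),
          if_pos (show 0 ≤ t ∧ t ≤ 0 + n by omega)]
        simp
      rw [hb]
      congr 1
      cases t with
      | zero => simp [blockOne]
      | succ t =>
        cases j with
        | zero => simp [blockOne]
        | succ j =>
          simp only [blockOne, Nat.succ_ne_zero, if_neg, if_false, Nat.add_sub_cancel]
          exact ((ih.1 t (by omega) j (by omega))).symm
    refine ⟨h1, ?_⟩
    intro i hi j hj
    cases i with
    | zero =>
      simpa using h1 n le_rfl j hj
    | succ i =>
      rw [Mmat_succ, matMul]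
      have hrow : ∀ t ∈ Finset.range (n + (i+1) + 1),
          blockFactor Q n 0 (n + (i+1)) t * blockOne (Mmat Q n r) t j
          = if t = n + (i+1) then blockOne (Mmat Q n r) (n + (i+1)) j else 0 := by
        intro t _
        have hc : ¬ (0 ≤ n + (i+1) ∧ n + (i+1) ≤ 0 + n) := by omega
        simp only [blockFactor, hc, if_false]
        by_cases h : n + (i+1) = t
        · subst h; simp
        · have h' : t ≠ n + (i+1) := fun e => h e.symm
          simp [h, h']
      rw [Finset.sum_congr rfl hrow, Finset.sum_ite_eq']
      have hmem : n + (i+1) ∈ Finset.range (n + (i+1) + 1) := by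
        simp
      rw [if_pos hmem]
      have hne : n + (i + 1) ≠ 0 := by omega
      cases j with
      | zero =>
        simp [blockOne, hne]
      | succ j =>
        simp only [blockOne, hne, if_neg, if_false, Nat.succ_ne_zero,
          Nat.add_sub_cancel]
        have : n + (i + 1) - 1 = n + i := by omega
        rw [this, ih.2 i (by omega) j (by omega)]
        have h5 : (i + 1 ≤ j + 1) ↔ (i ≤ j) := by omega
        have h6 : j + 1 - (i + 1) = j - i := by omega
        simp only [h5, h6]

/-- For a lower triangular `A` with nonzero diagonal and left production matrix
`Q` (so `A = Q ⬝ blockdiag(1, A)`), the transpose of the `r`-th leading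
principal Toeplitz matrix of the `n`-th row of `A` equals the submatrix of
`M_{n,r}` with rows `n,…,n+r` and columns `0,…,r`. -/
theorem toeplitz_row_eq_submatrix (A Q : ℕ → ℕ → ℝ)
    (hAtri : ∀ n k, n < k → A n k = 0) (hdiag : ∀ n, A n n ≠ 0)
    (hQtri : ∀ n k, n < k → Q n k = 0)
    (hprod : ∀ n k, A n k = ∑ i ∈ Finset.range (n + 1), Q n i * blockOne A i k) :
    ∀ n r i j : ℕ, i ≤ r → j ≤ r →
      (if i ≤ j then A n (j - i) else 0) = Mmat Q n r (n + i) j := by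
  intro n r i j hi hj
  exact ((aux A Q hprod n r).2 i hi j hj).symm
end

section
/- For every n ≥ 0, the polynomial ∑_{k=0}^n C(n,k) k^{n-k} x^k, whose coefficients are the idempotent numbers, is real-rooted. -/
/-- A real polynomial is real-rooted if it is constant or all of its complex
roots are real. -/
def RealRooted (p : Polynomial ℝ) : Prop :=
  p.natDegree = 0 ∨ ∀ z : ℂ, Polynomial.aeval z p = 0 → z.im = 0

/-!
Embed the polynomial in the family `P n s = ∑ₖ C(n,k) (k+s)^(n-k) X^k` (`idempotentPoly n s`),
`s ≥ 0`, so that it is `P n 0`. This family is closed under both derivatives,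
`∂ₓ P (n+1) s = (n+1) P n (s+1)` and `∂ₛ P (n+1) s = (n+1) P n s`, and satisfies
`P (n+1) s = s P n s + X P n (s+1) + X ∂ₓ P n s`.

By induction on `n`: for every `s ≥ 0` the roots of `P n s` are real, simple and nonpositive,
they interlace those of `P n (s+t)` for `0 < t ≤ 1`, and, for `s > 0`, those of `P (n+1) s`.
In the inductive step the recurrence determines the sign of `P (n+2) s` at the roots of
`P (n+1) s` and of `P (n+1) (s+1)`; these two interlacing sequences produce `n + 2` sign changes,
hence `n + 2` real roots. The mean value theorem in `s` writes `P (n+2) (s+t)` at a root of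
`P (n+2) s` as a positive multiple of `P (n+1) ξ`, whose sign there is known, and counting the
roots of `P (n+2) (s+t)` above each root of `P (n+2) s` by parity turns these signs into
interlacing.
-/

open Polynomial Finset Filter

noncomputable def idempotentPoly (n : ℕ) (s : ℝ) : ℝ[X] :=
  ∑ k ∈ range (n + 1), C ((n.choose k : ℝ) * ((k : ℝ) + s) ^ (n - k)) * X ^ k

section IdempotentPoly

variable {n : ℕ} {s x : ℝ}

lemma coeff_idempotentPoly (n : ℕ) (s : ℝ) (j : ℕ) : (idempotentPoly n s).coeff j =
    if j ≤ n then (n.choose j : ℝ) * ((j : ℝ) + s) ^ (n - j) else 0 := by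
  simp only [idempotentPoly, finsetSum_coeff, coeff_C_mul_X_pow, sum_ite_eq, mem_range,
    Nat.lt_succ_iff]

lemma eval_idempotentPoly (n : ℕ) (s x : ℝ) : (idempotentPoly n s).eval x =
    ∑ k ∈ range (n + 1), (n.choose k : ℝ) * ((k : ℝ) + s) ^ (n - k) * x ^ k := by
  simp [idempotentPoly, eval_finsetSum]

lemma eval_zero_idempotentPoly (n : ℕ) (s : ℝ) : (idempotentPoly n s).eval 0 = s ^ n := by
  rw [← coeff_zero_eq_eval_zero, coeff_idempotentPoly]
  simp

lemma natDegree_idempotentPoly (n : ℕ) (s : ℝ) : (idempotentPoly n s).natDegree = n := by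
  refine natDegree_eq_of_le_of_coeff_ne_zero ?_ (by simp [coeff_idempotentPoly])
  exact natDegree_le_iff_coeff_eq_zero.2 fun j hj => by simp [coeff_idempotentPoly, not_le.2 hj]

lemma monic_idempotentPoly (n : ℕ) (s : ℝ) : (idempotentPoly n s).Monic := by
  simp [Monic, leadingCoeff, natDegree_idempotentPoly, coeff_idempotentPoly]

lemma eval_idempotentPoly_pos (hs : 0 ≤ s) (hx : 0 ≤ x) (hsx : 0 < s ∨ 0 < x) :
    0 < (idempotentPoly n s).eval x := by
  rw [eval_idempotentPoly]
  have hterm : ∀ k ∈ range (n + 1),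
      0 ≤ (n.choose k : ℝ) * ((k : ℝ) + s) ^ (n - k) * x ^ k := fun k _ => by positivity
  rcases hsx with hs | hx
  · refine lt_of_lt_of_le ?_ (single_le_sum hterm (mem_range.2 n.succ_pos))
    simpa using pow_pos hs n
  · refine lt_of_lt_of_le ?_ (single_le_sum hterm (self_mem_range_succ n))
    simpa using pow_pos hx n

lemma nonpos_of_isRoot_idempotentPoly (hs : 0 ≤ s) (hx : (idempotentPoly n s).IsRoot x) :
    x ≤ 0 :=
  not_lt.1 fun hx' => (eval_idempotentPoly_pos hs hx'.le (Or.inr hx')).ne' hx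

lemma neg_of_isRoot_idempotentPoly (hs : 0 < s) (hx : (idempotentPoly n s).IsRoot x) : x < 0 :=
  not_le.1 fun hx' => (eval_idempotentPoly_pos hs.le hx' (Or.inl hs)).ne' hx

lemma derivative_idempotentPoly_succ (n : ℕ) (s : ℝ) :
    derivative (idempotentPoly (n + 1) s) = C ((n : ℝ) + 1) * idempotentPoly n (s + 1) := by
  ext j
  rw [coeff_derivative, coeff_C_mul, coeff_idempotentPoly, coeff_idempotentPoly]
  by_cases hj : j ≤ n
  · have hchoose : ((j : ℝ) + 1) * ((n + 1).choose (j + 1) : ℝ) =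
        ((n : ℝ) + 1) * (n.choose j : ℝ) := by
      rw [mul_comm]
      exact_mod_cast (Nat.add_one_mul_choose_eq n j).symm
    rw [if_pos (by omega), if_pos hj, show n + 1 - (j + 1) = n - j by omega]
    push_cast
    linear_combination ((j : ℝ) + (s + 1)) ^ (n - j) * hchoose
  · rw [if_neg (by omega), if_neg hj]
    ring

lemma idempotentPoly_succ (n : ℕ) (s : ℝ) : idempotentPoly (n + 1) s =
    C s * idempotentPoly n s + X * idempotentPoly n (s + 1) +
      X * derivative (idempotentPoly n s) := by
  ext j
  rcases j with _ | j
  · simp [coeff_idempotentPoly]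
    ring
  · simp only [coeff_add, coeff_C_mul, coeff_X_mul, coeff_derivative, coeff_idempotentPoly]
    split_ifs <;> try omega
    · rw [show n + 1 - (j + 1) = n - (j + 1) + 1 by omega,
        show n - j = n - (j + 1) + 1 by omega, Nat.choose_succ_succ]
      push_cast
      ring
    · obtain rfl : j = n := by omega
      simp
    · simp

lemma hasDerivAt_eval_idempotentPoly_succ (n : ℕ) (x s : ℝ) :
    HasDerivAt (fun u => (idempotentPoly (n + 1) u).eval x)
      (((n : ℝ) + 1) * (idempotentPoly n s).eval x) s := by
  simp only [eval_idempotentPoly]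
  refine (HasDerivAt.fun_sum fun (k : ℕ) _ =>
    ((((hasDerivAt_id s).const_add (k : ℝ)).pow (n + 1 - k)).const_mul
      ((n + 1).choose k : ℝ)).mul_const (x ^ k)).congr_deriv ?_
  simp only [sum_range_succ _ (n + 1), Nat.sub_self, Nat.cast_zero, zero_mul, mul_zero, add_zero,
    mul_one, id, mul_sum]
  refine sum_congr rfl fun k hk => ?_
  have hk : k ≤ n := Nat.lt_succ_iff.1 (mem_range.1 hk)
  have hchoose : ((n.choose k : ℕ) : ℝ) * ((n : ℝ) + 1) =
      ((n + 1).choose k : ℝ) * ((n + 1 - k : ℕ) : ℝ) := by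
    exact_mod_cast Nat.choose_mul_succ_eq n k
  rw [show n + 1 - k - 1 = n - k by omega]
  linear_combination -((k : ℝ) + s) ^ (n - k) * x ^ k * hchoose

end IdempotentPoly

lemma eq_prod_X_sub_C_of_isRoot {K : Type*} [Field K] {p : K[X]} {N : ℕ} {v : ℕ → K}
    (hp : p.Monic) (hdeg : p.natDegree = N) (hv : Set.InjOn v (Set.Iio N))
    (hroot : ∀ i < N, p.IsRoot (v i)) : p = ∏ i ∈ range N, (X - C (v i)) := by
  refine eq_of_monic_of_dvd_of_natDegree_le (monic_prod_of_monic _ _ fun i _ => monic_X_sub_C _)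
    hp (prod_dvd_of_coprime ?_ fun i hi => dvd_iff_isRoot.2 (hroot i (mem_range.1 hi))) ?_
  · intro i hi j hj hij
    exact isCoprime_X_sub_C_of_isUnit_sub
      (sub_ne_zero.2 fun h => hij (hv (by simpa using hi) (by simpa using hj) h)).isUnit
  · rw [natDegree_prod_of_monic _ _ fun i _ => monic_X_sub_C _]
    simp [hdeg]

lemma neg_one_pow_mul_prod_sub_pos {ι : Type*} (S : Finset ι) (v : ι → ℝ) {x : ℝ}
    (h : ∀ j ∈ S, v j ≠ x) :
    0 < (-1 : ℝ) ^ #{j ∈ S | x < v j} * ∏ j ∈ S, (x - v j) := by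
  rw [← prod_const, prod_filter, ← prod_mul_distrib]
  refine prod_pos fun j hj => ?_
  split_ifs with hxj
  · linarith
  · have := lt_of_le_of_ne (not_lt.1 hxj) (h j hj)
    linarith

section StrictAnti

variable {N : ℕ} {v : ℕ → ℝ}

lemma neg_one_pow_mul_eval_prod_pos (hv : StrictAntiOn v (Set.Iio N)) {m : ℕ} {x : ℝ}
    (hm : m ≤ N) (hlo : m < N → v m < x) (hhi : ∀ j, j + 1 = m → x < v j) :
    0 < (-1 : ℝ) ^ m * (∏ i ∈ range N, (X - C (v i))).eval x := by
  have hbelow : ∀ j < N, m ≤ j → v j < x := fun j hj hmj =>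
    lt_of_le_of_lt (hv.antitoneOn (lt_of_le_of_lt hmj hj) hj hmj) (hlo (by omega))
  have habove : ∀ j < m, x < v j := by
    intro j hjm
    obtain ⟨k, rfl⟩ : ∃ k, m = k + 1 := ⟨m - 1, by omega⟩
    exact lt_of_lt_of_le (hhi k rfl) (hv.antitoneOn (by simp; omega) (by simp; omega) (by omega))
  have hfilter : {j ∈ range N | x < v j} = range m := by
    ext j
    simp only [mem_filter, mem_range]
    constructor
    · rintro ⟨hj, hxj⟩
      by_contra hmj
      exact (hbelow j hj (not_lt.1 hmj)).not_gt hxj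
    · exact fun hjm => ⟨by omega, habove j hjm⟩
  have hne : ∀ j ∈ range N, v j ≠ x := fun j hj => by
    rcases lt_or_ge j m with hjm | hmj
    · exact (habove j hjm).ne'
    · exact (hbelow j (mem_range.1 hj) hmj).ne
  simpa [eval_prod, hfilter] using neg_one_pow_mul_prod_sub_pos (range N) v hne

lemma neg_one_pow_mul_eval_derivative_prod_pos (hv : StrictAntiOn v (Set.Iio N)) {i : ℕ}
    (hi : i < N) :
    0 < (-1 : ℝ) ^ i * (derivative (∏ j ∈ range N, (X - C (v j)))).eval (v i) := by
  have hfilter : {j ∈ (range N).erase i | v i < v j} = range i := by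
    ext j
    simp only [mem_filter, mem_erase, mem_range]
    constructor
    · rintro ⟨⟨hji, hj⟩, hvij⟩
      by_contra hij
      exact (hv hi hj (by omega)).not_gt hvij
    · exact fun hji => ⟨⟨by omega, by omega⟩, hv (by simp; omega) hi hji⟩
  have hne : ∀ j ∈ (range N).erase i, v j ≠ v i := fun j hj => by
    obtain ⟨hji, hj⟩ := mem_erase.1 hj
    exact hv.injOn.ne (mem_range.1 hj) hi hji
  rw [← mul_prod_erase _ _ (mem_range.2 hi)]
  simpa [eval_prod, hfilter] using neg_one_pow_mul_prod_sub_pos _ v hne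

end StrictAnti

lemma exists_isRoot_of_neg_one_pow_mul_pos (p : ℝ[X]) {a b : ℝ} (hab : a < b) {m : ℕ}
    (ha : 0 < (-1 : ℝ) ^ (m + 1) * p.eval a) (hb : 0 < (-1 : ℝ) ^ m * p.eval b) :
    ∃ c ∈ Set.Ioo a b, p.IsRoot c := by
  have hcont : ContinuousOn (fun x => (-1 : ℝ) ^ m * p.eval x) (Set.Icc a b) :=
    (continuous_const.mul p.continuous).continuousOn
  rw [pow_succ] at ha
  obtain ⟨c, hc, hc0⟩ := intermediate_value_Ioo hab.le hcont ⟨by linarith, hb⟩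
  exact ⟨c, hc, by simpa using hc0⟩

lemma Polynomial.Monic.exists_lt_neg_one_pow_mul_eval_pos {p : ℝ[X]} (hp : p.Monic) (c : ℝ) :
    ∃ x < c, 0 < (-1 : ℝ) ^ p.natDegree * p.eval x := by
  set q := (-1 : ℝ[X]) ^ p.natDegree * p.comp (-X)
  have hq : q.Monic := hp.neg_one_pow_natDegree_mul_comp_neg_X
  have hev : ∀ᶠ y in atTop, 0 < q.eval y := by
    by_cases hdeg : 0 < q.degree
    · exact (q.tendsto_atTop_of_leadingCoeff_nonneg hdeg (by simp [hq.leadingCoeff]))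
        |>.eventually_gt_atTop 0
    · simp [hq.degree_le_zero_iff_eq_one.1 (not_lt.1 hdeg)]
  obtain ⟨y, hy, hyc⟩ := (hev.and (eventually_gt_atTop (-c))).exists
  exact ⟨-y, by linarith, by simpa [q] using hy⟩

lemma mod_two_eq_of_neg_one_pow_mul_pos {a b : ℕ} {c : ℝ} (ha : 0 < (-1 : ℝ) ^ a * c)
    (hb : 0 < (-1 : ℝ) ^ b * c) : a % 2 = b % 2 := by
  rcases Nat.even_or_odd a with ha' | ha' <;> rcases Nat.even_or_odd b with hb' | hb' <;>
    simp only [ha'.neg_one_pow, hb'.neg_one_pow] at ha hb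
  · rw [Nat.even_iff.1 ha', Nat.even_iff.1 hb']
  · linarith
  · linarith
  · rw [Nat.odd_iff.1 ha', Nat.odd_iff.1 hb']

lemma eq_self_of_mod_two_eq {N : ℕ} {M : ℕ → ℕ}
    (hmono : ∀ i, i + 1 < N → M i ≤ M (i + 1))
    (hpar : ∀ i < N, M i % 2 = i % 2) (hle : ∀ i < N, M i ≤ N) : ∀ i < N, M i = i := by
  have hstep : ∀ i, i + 1 < N → M i + 1 ≤ M (i + 1) := fun i hi => by
    have := hmono i hi; have := hpar i (by omega); have := hpar (i + 1) hi; omega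
  have hgrow : ∀ d i, i + d < N → M i + d ≤ M (i + d) := by
    intro d
    induction d with
    | zero => simp
    | succ d ih =>
      intro i hi
      rw [← add_assoc i]
      have := ih i (by omega); have := hstep (i + d) (by omega); omega
  intro i hi
  have h1 := hgrow i 0 (by omega)
  rw [zero_add] at h1
  have h2 := hgrow (N - 1 - i) i (by omega)
  have h3 := hle (i + (N - 1 - i)) (by omega)
  have h4 := hpar i hi
  omega

/-- `u` has `M` entries and `v` has `N`, and `v (i + 1) < u i < v i` whenever both sides are
defined. -/
def Interlace (M N : ℕ) (u v : ℕ → ℝ) : Prop :=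
  (∀ i < M, u i < v i) ∧ ∀ i, i + 1 < N → v (i + 1) < u i

lemma interlace_of_neg_one_pow_mul_eval_pos {N : ℕ} {u v : ℕ → ℝ}
    (hu : StrictAntiOn u (Set.Iio N)) (hv : StrictAntiOn v (Set.Iio N))
    (hsign : ∀ i < N, 0 < (-1 : ℝ) ^ i * (∏ j ∈ range N, (X - C (u j))).eval (v i)) :
    Interlace N N u v := by
  simp only [eval_prod, eval_sub, eval_X, eval_C] at hsign
  have hne : ∀ i < N, ∀ j ∈ range N, u j ≠ v i := fun i hi j hj h => by
    simpa [prod_eq_zero (f := fun j => v i - u j) hj (by rw [h, sub_self])] using hsign i hi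
  have hM : ∀ i < N, #{j ∈ range N | v i < u j} = i := by
    refine eq_self_of_mod_two_eq (M := fun i => #{j ∈ range N | v i < u j})
      (fun i hi => card_le_card fun j hj => ?_) (fun i hi => ?_)
      (fun i _ => (card_filter_le _ _).trans (card_range N).le)
    · simp only [mem_filter] at hj ⊢
      exact ⟨hj.1, (hv (show i < N by omega) hi i.lt_succ_self).trans hj.2⟩
    · exact mod_two_eq_of_neg_one_pow_mul_pos (neg_one_pow_mul_prod_sub_pos _ u (hne i hi))
        (hsign i hi)
  constructor
  · intro i hi
    by_contra! hvu
    have hsub : range (i + 1) ⊆ {j ∈ range N | v i < u j} := fun j hj => by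
      simp only [mem_filter, mem_range] at hj ⊢
      exact ⟨by omega, lt_of_lt_of_le (lt_of_le_of_ne hvu (hne i hi i (mem_range.2 hi)).symm)
        (hu.antitoneOn (by simp; omega) hi (by omega))⟩
    have := card_le_card hsub
    simp only [card_range] at this
    have := hM i hi
    omega
  · intro i hi
    by_contra! hvu
    have hsub : {j ∈ range N | v (i + 1) < u j} ⊆ range i := fun j hj => by
      simp only [mem_filter, mem_range] at hj ⊢
      by_contra! hij
      exact (lt_of_lt_of_le hj.2 (hu.antitoneOn (show i < N by omega) hj.1 hij)).not_ge hvu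
    have := card_le_card hsub
    simp only [card_range] at this
    have := hM (i + 1) hi
    omega

def IsRootFamily (n : ℕ) (R : ℝ → ℕ → ℝ) : Prop :=
  ∀ s, 0 ≤ s → StrictAntiOn (R s) (Set.Iio n) ∧
    (∀ i < n, (idempotentPoly n s).IsRoot (R s i)) ∧
    ∀ t ∈ Set.Ioc (0 : ℝ) 1, Interlace n n (R (s + t)) (R s)

namespace IsRootFamily

variable {n : ℕ} {R : ℝ → ℕ → ℝ} {s : ℝ}

lemma eq_prod (h : IsRootFamily n R) (hs : 0 ≤ s) :
    idempotentPoly n s = ∏ i ∈ range n, (X - C (R s i)) :=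
  eq_prod_X_sub_C_of_isRoot (monic_idempotentPoly n s) (natDegree_idempotentPoly n s)
    (h s hs).1.injOn (h s hs).2.1

lemma neg_one_pow_mul_eval_pos (h : IsRootFamily n R) (hs : 0 ≤ s) {m : ℕ} {x : ℝ}
    (hm : m ≤ n) (hlo : m < n → R s m < x) (hhi : ∀ j, j + 1 = m → x < R s j) :
    0 < (-1 : ℝ) ^ m * (idempotentPoly n s).eval x := by
  rw [h.eq_prod hs]
  exact neg_one_pow_mul_eval_prod_pos (h s hs).1 hm hlo hhi

lemma lt_of_lt_of_le_add_one (h : IsRootFamily n R) (hs : 0 ≤ s) {s' : ℝ} (hss' : s < s')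
    (hs' : s' ≤ s + 1) {i : ℕ} (hi : i < n) : R s' i < R s i := by
  simpa using ((h s hs).2.2 (s' - s) ⟨by linarith, by linarith⟩).1 i hi

end IsRootFamily

section InductiveStep

variable {n : ℕ} {A B : ℝ → ℕ → ℝ} {s : ℝ}

lemma neg_one_pow_mul_eval_at_root_pos (hB : IsRootFamily (n + 1) B) (hs : 0 ≤ s) {i : ℕ}
    (hi : i < n + 1) (hneg : B s i < 0) :
    0 < (-1 : ℝ) ^ (i + 1) * (idempotentPoly (n + 2) s).eval (B s i) := by
  obtain ⟨hanti, hroot, hrow⟩ := hB s hs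
  obtain ⟨hlt, hgap⟩ := hrow 1 ⟨one_pos, le_rfl⟩
  have h1 : 0 < (-1 : ℝ) ^ i * (idempotentPoly (n + 1) (s + 1)).eval (B s i) :=
    hB.neg_one_pow_mul_eval_pos (by linarith) hi.le (fun _ => hlt i hi)
      fun j hj => hj ▸ hgap j (by omega)
  have h2 : 0 < (-1 : ℝ) ^ i * (derivative (idempotentPoly (n + 1) s)).eval (B s i) := by
    rw [hB.eq_prod hs]
    exact neg_one_pow_mul_eval_derivative_prod_pos hanti hi
  have hrec : (idempotentPoly (n + 2) s).eval (B s i) = B s i *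
      ((idempotentPoly (n + 1) (s + 1)).eval (B s i) +
        (derivative (idempotentPoly (n + 1) s)).eval (B s i)) := by
    rw [show idempotentPoly (n + 2) s = _ from idempotentPoly_succ (n + 1) s]
    simp only [eval_add, eval_mul, eval_C, eval_X, (hroot i hi).eq_zero]
    ring
  rw [hrec, show ∀ a b : ℝ, (-1 : ℝ) ^ (i + 1) * (B s i * (a + b)) =
    -B s i * ((-1) ^ i * a + (-1) ^ i * b) from fun a b => by ring]
  exact mul_pos (neg_pos.2 hneg) (add_pos h1 h2)

lemma neg_one_pow_mul_eval_at_shifted_root_pos (hA : IsRootFamily n A)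
    (hB : IsRootFamily (n + 1) B) (hAB : ∀ s > 0, Interlace n (n + 1) (A s) (B s)) (hs : 0 ≤ s)
    {j : ℕ} (hj : j < n + 1) :
    0 < (-1 : ℝ) ^ (j + 1) * (idempotentPoly (n + 2) s).eval (B (s + 1) j) := by
  obtain ⟨hlt, hgap⟩ := (hB s hs).2.2 1 ⟨one_pos, le_rfl⟩
  obtain ⟨hAB₁, hAB₂⟩ := hAB (s + 1) (by linarith)
  have hroot := (hB (s + 1) (by linarith)).2.1 j hj
  have h1 : 0 < (-1 : ℝ) ^ (j + 1) * (idempotentPoly (n + 1) s).eval (B (s + 1) j) :=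
    hB.neg_one_pow_mul_eval_pos hs (by omega) (fun h => hgap j h) fun k hk => by
      obtain rfl : k = j := by omega
      exact hlt k hj
  have h2 : 0 < (-1 : ℝ) ^ j * (idempotentPoly n (s + 1)).eval (B (s + 1) j) :=
    hA.neg_one_pow_mul_eval_pos (by linarith) (by omega) (fun h => hAB₁ j h)
      fun k hk => hk ▸ hAB₂ k (by omega)
  have hneg : B (s + 1) j < 0 := neg_of_isRoot_idempotentPoly (by linarith) hroot
  have hrec : (idempotentPoly (n + 2) s).eval (B (s + 1) j) =
      s * (idempotentPoly (n + 1) s).eval (B (s + 1) j) +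
        B (s + 1) j * (((n : ℝ) + 1) * (idempotentPoly n (s + 1)).eval (B (s + 1) j)) := by
    rw [show idempotentPoly (n + 2) s = _ from idempotentPoly_succ (n + 1) s,
      derivative_idempotentPoly_succ]
    simp only [eval_add, eval_mul, eval_C, eval_X, hroot.eq_zero]
    ring
  rw [hrec, show ∀ a b : ℝ,
    (-1 : ℝ) ^ (j + 1) * (s * a + B (s + 1) j * (((n : ℝ) + 1) * b)) =
      s * ((-1) ^ (j + 1) * a) + -B (s + 1) j * ((n + 1) * ((-1) ^ j * b)) from
    fun a b => by ring]
  exact add_pos_of_nonneg_of_pos (mul_nonneg hs h1.le)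
    (mul_pos (neg_pos.2 hneg) (mul_pos (by positivity) h2))

lemma exists_isRoot_idempotentPoly (hA : IsRootFamily n A) (hB : IsRootFamily (n + 1) B)
    (hAB : ∀ s > 0, Interlace n (n + 1) (A s) (B s)) (hs : 0 ≤ s) {i : ℕ} (hi : i < n + 2) :
    ∃ x, (idempotentPoly (n + 2) s).IsRoot x ∧
      (i < n + 1 → B s i ≤ x ∧ (0 < s → B s i < x)) ∧
      ∀ j, j + 1 = i → x < B (s + 1) j := by
  obtain ⟨hanti, hroot, hrow⟩ := hB s hs
  have hshift := fun j (hj : j < n + 1) =>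
    neg_one_pow_mul_eval_at_shifted_root_pos hA hB hAB hs hj
  rcases i with _ | k
  · rcases hs.eq_or_lt with rfl | hs
    · refine ⟨0, by simp [IsRoot, eval_zero_idempotentPoly], fun _ => ?_, fun j hj => by omega⟩
      exact ⟨nonpos_of_isRoot_idempotentPoly le_rfl (hroot 0 (by omega)),
        fun h => (lt_irrefl _ h).elim⟩
    have hneg := neg_of_isRoot_idempotentPoly hs (hroot 0 (by omega))
    obtain ⟨x, hx, hroot⟩ := exists_isRoot_of_neg_one_pow_mul_pos _ hneg
      (neg_one_pow_mul_eval_at_root_pos hB hs.le (by omega) hneg)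
      (by simpa [eval_zero_idempotentPoly] using pow_pos hs (n + 2))
    exact ⟨x, hroot, fun _ => ⟨hx.1.le, fun _ => hx.1⟩, fun j hj => by omega⟩
  by_cases hk : k < n
  · have hneg : B s (k + 1) < 0 :=
      (hanti (show 0 < n + 1 by omega) (show k + 1 < n + 1 by omega) k.succ_pos).trans_le
        (nonpos_of_isRoot_idempotentPoly hs (hroot 0 (by omega)))
    obtain ⟨x, hx, hroot⟩ := exists_isRoot_of_neg_one_pow_mul_pos _
      ((hrow 1 ⟨one_pos, le_rfl⟩).2 k (by omega))
      (neg_one_pow_mul_eval_at_root_pos hB hs (by omega) hneg) (hshift k (by omega))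
    refine ⟨x, hroot, fun _ => ⟨hx.1.le, fun _ => hx.1⟩, fun j hj => ?_⟩
    obtain rfl : j = k := by omega
    exact hx.2
  · obtain rfl : n = k := by omega
    obtain ⟨y, hy, hypos⟩ :=
      (monic_idempotentPoly (n + 2) s).exists_lt_neg_one_pow_mul_eval_pos (B (s + 1) n)
    rw [natDegree_idempotentPoly] at hypos
    obtain ⟨x, hx, hroot⟩ :=
      exists_isRoot_of_neg_one_pow_mul_pos _ hy hypos (hshift n (by omega))
    refine ⟨x, hroot, fun h => absurd h (lt_irrefl _), fun j hj => ?_⟩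
    obtain rfl : j = n := by omega
    exact hx.2

lemma neg_one_pow_mul_eval_shift_pos (hB : IsRootFamily (n + 1) B) (hs : 0 ≤ s) {t : ℝ}
    (ht : t ∈ Set.Ioc (0 : ℝ) 1) {i : ℕ} (hi : i < n + 2) {x : ℝ}
    (hx : (idempotentPoly (n + 2) s).IsRoot x) (hlo : i < n + 1 → B s i ≤ x)
    (hhi : ∀ j, j + 1 = i → x < B (s + 1) j) :
    0 < (-1 : ℝ) ^ i * (idempotentPoly (n + 2) (s + t)).eval x := by
  obtain ⟨ξ, ⟨hsξ, hξt⟩, hslope⟩ := exists_hasDerivAt_eq_slope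
    (fun u => (idempotentPoly (n + 2) u).eval x) _ (by linarith [ht.1] : s < s + t)
    (fun u _ => (hasDerivAt_eval_idempotentPoly_succ (n + 1) x u).continuousAt.continuousWithinAt)
    fun u _ => hasDerivAt_eval_idempotentPoly_succ (n + 1) x u
  have hξ : 0 ≤ ξ := hs.trans hsξ.le
  have hsign : 0 < (-1 : ℝ) ^ i * (idempotentPoly (n + 1) ξ).eval x :=
    hB.neg_one_pow_mul_eval_pos hξ (by omega)
      (fun h => (hB.lt_of_lt_of_le_add_one hs hsξ (by linarith [ht.2]) h).trans_le (hlo h))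
      fun j hj => (hhi j hj).trans
        (hB.lt_of_lt_of_le_add_one hξ (by linarith [ht.2]) (by linarith) (by omega))
  have hval : (idempotentPoly (n + 2) (s + t)).eval x =
      t * ((((n + 1 : ℕ) : ℝ) + 1) * (idempotentPoly (n + 1) ξ).eval x) := by
    rw [hslope, hx.eq_zero, sub_zero, add_sub_cancel_left, mul_div_cancel₀ _ ht.1.ne']
  rw [hval, show ∀ a : ℝ, (-1 : ℝ) ^ i * (t * ((((n + 1 : ℕ) : ℝ) + 1) * a)) =
    t * (((n + 1 : ℕ) : ℝ) + 1) * ((-1) ^ i * a) from fun a => by ring]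
  exact mul_pos (mul_pos ht.1 (by positivity)) hsign

lemma exists_isRootFamily_add_two (hA : IsRootFamily n A) (hB : IsRootFamily (n + 1) B)
    (hAB : ∀ s > 0, Interlace n (n + 1) (A s) (B s)) :
    ∃ C, IsRootFamily (n + 2) C ∧ ∀ s > 0, Interlace (n + 1) (n + 2) (B s) (C s) := by
  choose! C hroot hlo hhi using fun s (hs : 0 ≤ s) i (hi : i < n + 2) =>
    exists_isRoot_idempotentPoly hA hB hAB hs hi
  have hgap : ∀ s, 0 ≤ s → ∀ i < n + 1, C s (i + 1) < B s i := fun s hs i hi =>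
    (hhi s hs (i + 1) (by omega) i rfl).trans (((hB s hs).2.2 1 ⟨one_pos, le_rfl⟩).1 i hi)
  have hanti : ∀ s, 0 ≤ s → StrictAntiOn (C s) (Set.Iio (n + 2)) := fun s hs =>
    (strictAntiOn_Iic_of_succ_lt (n := n + 1) fun i hi =>
      (hgap s hs i hi).trans_le (hlo s hs i (by omega) hi).1).mono
      fun i hi => Nat.lt_succ_iff.1 hi
  refine ⟨C, fun s hs => ⟨hanti s hs, hroot s hs, fun t ht => ?_⟩, fun s hs => ?_⟩
  · have hst : 0 ≤ s + t := by linarith [ht.1]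
    refine interlace_of_neg_one_pow_mul_eval_pos (hanti _ hst) (hanti s hs) fun i hi => ?_
    rw [← eq_prod_X_sub_C_of_isRoot (monic_idempotentPoly _ _) (natDegree_idempotentPoly _ _)
      (hanti _ hst).injOn (hroot _ hst)]
    exact neg_one_pow_mul_eval_shift_pos hB hs ht hi (hroot s hs i hi)
      (fun h => (hlo s hs i hi h).1) (hhi s hs i hi)
  · exact ⟨fun i hi => (hlo s hs.le i (by omega) hi).2 hs,
      fun i hi => hgap s hs.le i (by omega)⟩

end InductiveStep

lemma exists_isRootFamily (n : ℕ) : ∃ A B, IsRootFamily n A ∧ IsRootFamily (n + 1) B ∧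
    ∀ s > 0, Interlace n (n + 1) (A s) (B s) := by
  induction n with
  | zero =>
    refine ⟨fun _ _ => 0, fun s _ => -s,
      fun s _ => ⟨?_, by simp, fun t _ => ⟨by simp, by simp⟩⟩,
      fun s _ => ⟨?_, ?_, fun t ht => ⟨?_, by simp⟩⟩, fun s _ => ⟨by simp, by simp⟩⟩
    · exact fun i hi => absurd hi (Nat.not_lt_zero i)
    · exact fun i hi j hj hij => absurd hij (by simp_all)
    · intro i hi
      simp [IsRoot, eval_idempotentPoly, sum_range_succ]
    · intro i hi
      linarith [ht.1]
  | succ n ih =>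
    obtain ⟨A, B, hA, hB, hAB⟩ := ih
    obtain ⟨C, hC, hBC⟩ := exists_isRootFamily_add_two hA hB hAB
    exact ⟨B, C, hB, hC, hBC⟩

/-- For every `n ≥ 0`, the idempotent polynomial
`∑_{k=0}^n C(n,k) k^{n-k} x^k` is real-rooted (with `0^0 = 1`). -/
theorem realRooted_idempotent (n : ℕ) :
    RealRooted (∑ k ∈ Finset.range (n + 1),
      Polynomial.C ((n.choose k : ℝ) * (k : ℝ) ^ (n - k)) * Polynomial.X ^ k) := by
  obtain ⟨A, -, hA, -, -⟩ := exists_isRootFamily n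
  have hP : ∑ k ∈ Finset.range (n + 1),
      Polynomial.C ((n.choose k : ℝ) * (k : ℝ) ^ (n - k)) * Polynomial.X ^ k =
      ∏ i ∈ range n, (X - C (A 0 i)) := by
    simpa [idempotentPoly] using hA.eq_prod le_rfl
  refine Or.inr fun z hz => ?_
  rw [hP, map_prod] at hz
  obtain ⟨i, -, hi⟩ := prod_eq_zero_iff.1 hz
  rw [map_sub, aeval_X, aeval_C, sub_eq_zero] at hi
  simp [hi]
end

section
/- For any m, r ≥ 0 and every n ≥ 0, the r-Whitney polynomial ∑_{k=0}^n W_{m,r}(n,k) x^k is real-rooted, where W_{m,r}(n,k) are defined by W_{m,r}(0,k) = δ_{0,k} and W_{m,r}(n,k) = W_{m,r}(n−1,k−1) + (r + mk)·W_{m,r}(n−1,k). -/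
section WhitneyAux

open Polynomial Finset

lemma coeff_whitney (W : ℕ → ℕ → ℝ) (hWz : ∀ n k, n < k → W n k = 0) (n j : ℕ) :
    (∑ k ∈ Finset.range (n + 1), C (W n k) * X ^ k).coeff j = W n j := by
  rw [finset_sum_coeff]
  simp only [coeff_C_mul, coeff_X_pow, mul_ite, mul_one, mul_zero]
  rw [Finset.sum_ite_eq (Finset.range (n+1)) j (fun k => W n k)]
  by_cases h : j < n + 1
  · simp [h]
  · simp [h, hWz n j (by omega)]

lemma whitney_rec (a b : ℝ) (W : ℕ → ℕ → ℝ) (hWz : ∀ n k, n < k → W n k = 0)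
    (hrec : ∀ n k, W (n + 1) (k + 1) = W n k + (a + b * ((k : ℝ) + 1)) * W n (k + 1))
    (hrec0 : ∀ n, W (n + 1) 0 = a * W n 0) (n : ℕ) :
    (∑ k ∈ Finset.range (n + 2), C (W (n+1) k) * X ^ k)
      = (X + C a) * (∑ k ∈ Finset.range (n + 1), C (W n k) * X ^ k)
        + C b * X * derivative (∑ k ∈ Finset.range (n + 1), C (W n k) * X ^ k) := by
  set p := ∑ k ∈ Finset.range (n + 1), C (W n k) * X ^ k with hp
  have h1 : C b * X * derivative p = C b * (derivative p * X) := by ring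
  have h2 : (X + C a) * p = p * X + C a * p := by ring
  rw [h1, h2]
  ext j
  rw [coeff_whitney W hWz, coeff_add, coeff_add, coeff_C_mul, coeff_C_mul]
  cases j with
  | zero =>
      rw [coeff_mul_X_zero, coeff_mul_X_zero, coeff_whitney W hWz, mul_zero, add_zero, zero_add,
        hrec0]
  | succ k =>
      rw [coeff_mul_X, coeff_mul_X, coeff_derivative, coeff_whitney W hWz, coeff_whitney W hWz,
        hrec]
      ring


lemma whitney_step (m r : ℝ) (hm : 0 < m) (hr : 0 < r) (n : ℕ) (x : ℕ → ℝ)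
    (hneg : ∀ i, i < n → x i < 0) (hmono : ∀ i j, i < j → j < n → x i < x j) :
    ∃ y : ℕ → ℝ, (∀ i, i < n + 1 → y i < 0) ∧ (∀ i j, i < j → j < n + 1 → y i < y j) ∧
      (X + C r) * (∏ i ∈ Finset.range n, (X - C (x i)))
        + C m * X * derivative (∏ i ∈ Finset.range n, (X - C (x i)))
        = ∏ i ∈ Finset.range (n + 1), (X - C (y i)) := by
  set p : ℝ[X] := ∏ i ∈ Finset.range n, (X - C (x i)) with hpdef
  set Q : ℝ[X] := (X + C r) * p + C m * X * derivative p with hQdef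
  have hpm : p.Monic := monic_prod_of_monic _ _ fun i _ => monic_X_sub_C _
  have hpdeg : p.natDegree = n := by
    rw [hpdef, natDegree_prod _ _ fun i _ => X_sub_C_ne_zero _]
    simp
  have hQ1m : ((X + C r) * p).Monic := (monic_X_add_C r).mul hpm
  have hQ1deg : ((X + C r) * p).natDegree = n + 1 := by
    rw [natDegree_mul (monic_X_add_C r).ne_zero hpm.ne_zero, natDegree_X_add_C, hpdeg]
    omega
  have hnd : (C m * X * derivative p).natDegree < n + 1 := by
    rcases Nat.eq_zero_or_pos n with hn | hn
    · have hp1 : p = 1 := by rw [hpdef, hn]; simp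
      simp [hp1]
    · have h1 : (derivative p).natDegree < n :=
        hpdeg ▸ natDegree_derivative_lt (by omega)
      calc (C m * X * derivative p).natDegree
          ≤ (C m * X).natDegree + (derivative p).natDegree := natDegree_mul_le
        _ ≤ 1 + (derivative p).natDegree := by
            rw [natDegree_C_mul_X m hm.ne']
        _ < n + 1 := by omega
  have hQm : Q.Monic := by
    rw [hQdef]
    exact hQ1m.add_of_left (degree_lt_degree (by omega : (C m * X * derivative p).natDegree < ((X + C r) * p).natDegree))
  have hQdeg : Q.natDegree = n + 1 := by
    rw [hQdef, natDegree_add_eq_left_of_natDegree_lt (by omega), hQ1deg]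
  have hpeval : ∀ t : ℝ, p.eval t = ∏ i ∈ Finset.range n, (t - x i) := by
    intro t; rw [hpdef, eval_prod]; simp
  have hQeval : ∀ t : ℝ, Q.eval t = (t + r) * p.eval t + m * t * (derivative p).eval t := by
    intro t; rw [hQdef]; simp
  have hQx : ∀ i, i < n →
      Q.eval (x i) = m * x i * ∏ j ∈ (Finset.range n).erase i, (x i - x j) := by
    intro i hi
    have hmem : i ∈ Finset.range n := Finset.mem_range.mpr hi
    have hfac : p = (X - C (x i)) * ∏ j ∈ (Finset.range n).erase i, (X - C (x j)) :=
      (Finset.mul_prod_erase _ _ hmem).symm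
    have hp0 : p.eval (x i) = 0 := by rw [hfac]; simp
    have hd : (derivative p).eval (x i) = ∏ j ∈ (Finset.range n).erase i, (x i - x j) := by
      rw [hfac, derivative_mul]
      simp [eval_prod]
    rw [hQeval, hp0, hd]; ring
  have hQxsign : ∀ i, i < n → 0 < (-1 : ℝ) ^ (n - i) * Q.eval (x i) := by
    intro i hi
    have hsplit : (Finset.range n).erase i = Finset.range i ∪ Finset.Ico (i + 1) n := by
      ext j
      simp only [Finset.mem_erase, Finset.mem_range, Finset.mem_union, Finset.mem_Ico]
      omega
    have hdisj : Disjoint (Finset.range i) (Finset.Ico (i + 1) n) := by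
      simp only [Finset.disjoint_left, Finset.mem_range, Finset.mem_Ico]
      omega
    have hA : 0 < ∏ j ∈ Finset.range i, (x i - x j) :=
      Finset.prod_pos fun j hj => sub_pos.mpr (hmono j i (Finset.mem_range.mp hj) hi)
    have hCpos : 0 < ∏ j ∈ Finset.Ico (i + 1) n, (x j - x i) :=
      Finset.prod_pos fun j hj => by
        have h := Finset.mem_Ico.mp hj
        exact sub_pos.mpr (hmono i j (by omega) h.2)
    have hB : ∏ j ∈ Finset.Ico (i + 1) n, (x i - x j)
        = (-1 : ℝ) ^ (n - (i + 1)) * ∏ j ∈ Finset.Ico (i + 1) n, (x j - x i) := by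
      have hcst : ((-1 : ℝ)) ^ (n - (i + 1)) = ∏ _j ∈ Finset.Ico (i + 1) n, (-1 : ℝ) := by
        rw [Finset.prod_const, Nat.card_Ico]
      rw [hcst, ← Finset.prod_mul_distrib]
      exact Finset.prod_congr rfl fun j _ => by ring
    have hxi : x i < 0 := hneg i hi
    have hpow : ((-1 : ℝ)) ^ (n - i) = -(-1 : ℝ) ^ (n - (i + 1)) := by
      have he : n - i = (n - (i + 1)) + 1 := by omega
      rw [he, pow_succ]; ring
    rw [hQx i hi, hsplit, Finset.prod_union hdisj, hB, hpow]
    have key : 0 < m * (-x i) * ((∏ j ∈ Finset.range i, (x i - x j)) *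
        ∏ j ∈ Finset.Ico (i + 1) n, (x j - x i)) :=
      mul_pos (mul_pos hm (by linarith)) (mul_pos hA hCpos)
    have he2 : ((-1 : ℝ)) ^ (n - (i + 1)) * ((-1 : ℝ)) ^ (n - (i + 1)) = 1 := by
      rw [← pow_add]
      exact Even.neg_one_pow ⟨_, rfl⟩
    nlinarith [key, he2]
  have hQ0 : 0 < Q.eval 0 := by
    have hp0 : 0 < p.eval 0 := by
      rw [hpeval]
      exact Finset.prod_pos fun i hi => by
        have := hneg i (Finset.mem_range.mp hi); linarith
    rw [hQeval]
    nlinarith [mul_pos hr hp0]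
  have hT : ∃ t : ℝ, t < 0 ∧ t < x 0 ∧ 0 < (-1 : ℝ) ^ (n + 1) * Q.eval t := by
    set R : ℝ[X] := C ((-1 : ℝ) ^ (n + 1)) * Q.comp (-X) with hRdef
    have hc : ((-1 : ℝ) ^ (n + 1)) ≠ 0 := by
      apply pow_ne_zero; norm_num
    have hnX : (-X : ℝ[X]).natDegree = 1 := by rw [natDegree_neg, natDegree_X]
    have hcompdeg : (Q.comp (-X)).natDegree = n + 1 := by
      rw [natDegree_comp, hnX, hQdeg, mul_one]
    have hcompne : Q.comp (-X) ≠ 0 := fun h => by simp [h] at hcompdeg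
    have hRdeg : 0 < R.degree := by
      rw [hRdef, degree_C_mul hc, degree_eq_natDegree hcompne, hcompdeg]
      exact_mod_cast Nat.succ_pos n
    have hRlc : R.leadingCoeff = 1 := by
      rw [hRdef, leadingCoeff_mul, leadingCoeff_C,
        leadingCoeff_comp (by rw [hnX]; omega), hQm.leadingCoeff, leadingCoeff_neg,
        leadingCoeff_X, hQdeg, one_mul]
      rw [← pow_add]
      exact Even.neg_one_pow ⟨_, rfl⟩
    have htend : Filter.Tendsto (fun s => R.eval s) Filter.atTop Filter.atTop :=
      R.tendsto_atTop_of_leadingCoeff_nonneg hRdeg (by rw [hRlc]; norm_num)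
    obtain ⟨s, hs1, hs2⟩ :=
      ((htend.eventually_ge_atTop 1).and (Filter.eventually_gt_atTop (max 0 (-x 0)))).exists
    have hs0 : 0 < s := lt_of_le_of_lt (le_max_left _ _) hs2
    have hsx : -x 0 < s := lt_of_le_of_lt (le_max_right _ _) hs2
    have hre : R.eval s = (-1 : ℝ) ^ (n + 1) * Q.eval (-s) := by
      rw [hRdef]; simp [eval_comp]
    refine ⟨-s, by linarith, by linarith, ?_⟩
    rw [← hre]; linarith
  obtain ⟨t, ht0, htx, htsign⟩ := hT
  set z : ℕ → ℝ := fun i => if i = 0 then t else if i - 1 < n then x (i - 1) else 0 with hzdef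
  have hz0 : z 0 = t := by simp [hzdef]
  have hzlast : z (n + 1) = 0 := by simp [hzdef]
  have hzmid : ∀ i, i < n → z (i + 1) = x i := by
    intro i hi; simp [hzdef, hi]
  have hzsucc : ∀ i, i ≤ n → z i < z (i + 1) := by
    intro i hi
    cases i with
    | zero =>
        rcases Nat.eq_zero_or_pos n with hn | hn
        · rw [hz0]
          have : z 1 = 0 := by simp [hzdef, hn]
          rw [this]; exact ht0
        · rw [hz0, hzmid 0 hn]; exact htx
    | succ k =>
        rw [hzmid k (by omega)]
        rcases Nat.lt_or_ge (k + 1) n with h | h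
        · rw [hzmid (k + 1) h]; exact hmono k (k + 1) (by omega) h
        · have hkn : k + 1 = n := by omega
          have : z (k + 2) = 0 := by simp [hzdef]; omega
          rw [this]; exact hneg k (by omega)
  have hzsign : ∀ i, i ≤ n + 1 → 0 < (-1 : ℝ) ^ (n + 1 - i) * Q.eval (z i) := by
    intro i hi
    cases i with
    | zero => rw [hz0]; exact htsign
    | succ k =>
        rcases Nat.lt_or_ge k n with h | h
        · rw [hzmid k h]
          have : n + 1 - (k + 1) = n - k := by omega
          rw [this]; exact hQxsign k h
        · have hkn : k = n := by omega
          subst hkn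
          rw [hzlast]
          simpa using hQ0
  have hroot : ∀ i, ∃ u, i ≤ n → u ∈ Set.Ioo (z i) (z (i + 1)) ∧ Q.eval u = 0 := by
    intro i
    by_cases hi : i ≤ n
    · have h1 := hzsign i (by omega)
      have h2 := hzsign (i + 1) (by omega)
      have hle : z i ≤ z (i + 1) := (hzsucc i hi).le
      have hcont : ContinuousOn (fun u => Q.eval u) (Set.Icc (z i) (z (i + 1))) :=
        (Polynomial.continuous Q).continuousOn
      have hpow : n + 1 - i = (n - i) + 1 := by omega
      have hforms : n + 1 - (i + 1) = n - i := by omega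
      rw [hforms] at h2
      rw [hpow, pow_succ] at h1
      rcases Nat.even_or_odd (n - i) with he | ho
      · have e1 : ((-1 : ℝ)) ^ (n - i) = 1 := he.neg_one_pow
        rw [e1, one_mul] at h2
        rw [e1] at h1
        have hmem : (0 : ℝ) ∈ Set.Ioo (Q.eval (z i)) (Q.eval (z (i + 1))) :=
          ⟨by linarith, h2⟩
        obtain ⟨u, hu, hu0⟩ := intermediate_value_Ioo hle hcont hmem
        exact ⟨u, fun _ => ⟨hu, hu0⟩⟩
      · have e1 : ((-1 : ℝ)) ^ (n - i) = -1 := ho.neg_one_pow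
        rw [e1] at h2
        rw [e1] at h1
        have hmem : (0 : ℝ) ∈ Set.Ioo (Q.eval (z (i + 1))) (Q.eval (z i)) :=
          ⟨by linarith, by linarith⟩
        obtain ⟨u, hu, hu0⟩ := intermediate_value_Ioo' hle hcont hmem
        exact ⟨u, fun _ => ⟨hu, hu0⟩⟩
    · exact ⟨0, fun h => absurd h hi⟩
  choose y hy using hroot
  have hyIoo : ∀ i, i ≤ n → y i ∈ Set.Ioo (z i) (z (i + 1)) := fun i hi => (hy i hi).1
  have hyroot : ∀ i, i ≤ n → Q.eval (y i) = 0 := fun i hi => (hy i hi).2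
  have hzmono : ∀ a b, a ≤ b → b ≤ n + 1 → z a ≤ z b := by
    intro a b hab hb
    induction b with
    | zero =>
        have : a = 0 := by omega
        simp [this]
    | succ k ih =>
        rcases Nat.lt_or_ge a (k + 1) with h | h
        · exact le_trans (ih (by omega) (by omega)) (hzsucc k (by omega)).le
        · have : a = k + 1 := by omega
          rw [this]
  have hymono : ∀ i j, i < j → j < n + 1 → y i < y j := by
    intro i j hij hj
    have h1 : y i < z (i + 1) := (hyIoo i (by omega)).2
    have h2 : z j < y j := (hyIoo j (by omega)).1
    have h3 : z (i + 1) ≤ z j := hzmono (i + 1) j (by omega) (by omega)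
    linarith
  have hyneg : ∀ i, i < n + 1 → y i < 0 := by
    intro i hi
    have h1 : y i < z (i + 1) := (hyIoo i (by omega)).2
    have h2 : z (i + 1) ≤ z (n + 1) := hzmono _ _ (by omega) le_rfl
    rw [hzlast] at h2
    linarith
  refine ⟨y, hyneg, hymono, ?_⟩
  set P2 : ℝ[X] := ∏ i ∈ Finset.range (n + 1), (X - C (y i)) with hP2def
  have hP2m : P2.Monic := monic_prod_of_monic _ _ fun i _ => monic_X_sub_C _
  have hP2deg : P2.natDegree = n + 1 := by
    rw [hP2def, natDegree_prod _ _ fun i _ => X_sub_C_ne_zero _]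
    simp
  show Q = P2
  by_contra hne
  have hsub : Q - P2 ≠ 0 := sub_ne_zero.mpr hne
  have hdeg : (Q - P2).degree < ((n + 1 : ℕ) : WithBot ℕ) := by
    have h1 : Q.degree = P2.degree := by
      rw [degree_eq_natDegree hQm.ne_zero, degree_eq_natDegree hP2m.ne_zero, hQdeg, hP2deg]
    have := degree_sub_lt h1 hQm.ne_zero (by rw [hQm.leadingCoeff, hP2m.leadingCoeff])
    rwa [degree_eq_natDegree hQm.ne_zero, hQdeg] at this
  have hnat : (Q - P2).natDegree < n + 1 := (natDegree_lt_iff_degree_lt hsub).mpr hdeg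
  apply hsub
  apply Polynomial.eq_zero_of_natDegree_lt_card_of_eval_eq_zero' _
    ((Finset.range (n + 1)).image y)
  · intro v hv
    obtain ⟨i, hi, rfl⟩ := Finset.mem_image.mp hv
    have hi' : i ≤ n := by
      have := Finset.mem_range.mp hi; omega
    have hP2y : P2.eval (y i) = 0 := by
      rw [hP2def, eval_prod]
      exact Finset.prod_eq_zero hi (by simp)
    rw [eval_sub, hyroot i hi', hP2y, sub_zero]
  · have hinj : Set.InjOn y (Finset.range (n + 1)) := by
      intro a ha b hb hab
      by_contra hne'
      rcases lt_or_gt_of_ne hne' with h | h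
      · exact absurd hab (ne_of_lt (hymono a b h (Finset.mem_range.mp hb)))
      · exact absurd hab.symm (ne_of_lt (hymono b a h (Finset.mem_range.mp ha)))
    rw [Finset.card_image_of_injOn hinj, Finset.card_range]
    exact hnat

lemma whitney_prod (a b : ℝ) (ha : 0 < a) (hb : 0 < b) (W : ℕ → ℕ → ℝ)
    (hW0 : ∀ k, W 0 k = if k = 0 then 1 else 0)
    (hWz : ∀ n k, n < k → W n k = 0)
    (hrec : ∀ n k, W (n + 1) (k + 1) = W n k + (a + b * ((k : ℝ) + 1)) * W n (k + 1))
    (hrec0 : ∀ n, W (n + 1) 0 = a * W n 0) (n : ℕ) :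
    ∃ x : ℕ → ℝ, (∀ i, i < n → x i < 0) ∧ (∀ i j, i < j → j < n → x i < x j) ∧
      (∑ k ∈ Finset.range (n + 1), C (W n k) * X ^ k)
        = ∏ i ∈ Finset.range n, (X - C (x i)) := by
  induction n with
  | zero => exact ⟨fun _ => 0, by omega, by omega, by simp [hW0]⟩
  | succ n ih =>
      obtain ⟨x, hneg, hmono, hprod⟩ := ih
      obtain ⟨y, h1, h2, h3⟩ := whitney_step b a hb ha n x hneg hmono
      exact ⟨y, h1, h2, by rw [whitney_rec a b W hWz hrec hrec0 n, hprod, h3]⟩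

lemma aeval_prod_im (n : ℕ) (x : ℕ → ℝ) (z : ℂ)
    (h : Polynomial.aeval z (∏ i ∈ Finset.range n, (X - C (x i))) = 0) : z.im = 0 := by
  rw [map_prod] at h
  obtain ⟨i, _, hi⟩ := Finset.prod_eq_zero_iff.mp h
  simp only [map_sub, aeval_X, aeval_C] at hi
  have hz : z = ((x i : ℝ) : ℂ) := by
    have := sub_eq_zero.mp hi
    simpa using this
  rw [hz, Complex.ofReal_im]

/-- For any `m, r ≥ 0` and every `n ≥ 0`, the `r`-Whitney polynomial
`∑_{k=0}^n W_{m,r}(n,k) x^k` is real-rooted, where the `r`-Whitney numbers are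
given by `W_{m,r}(0,k) = δ_{0,k}` and
`W_{m,r}(n,k) = W_{m,r}(n−1,k−1) + (r + mk)·W_{m,r}(n−1,k)`. -/
theorem realRooted_whitney (m r : ℕ) (W : ℕ → ℕ → ℝ)
    (hW0 : ∀ k, W 0 k = if k = 0 then 1 else 0)
    (hWz : ∀ n k, n < k → W n k = 0)
    (hWrec : ∀ n k, W (n + 1) (k + 1) =
      W n k + ((r : ℝ) + (m : ℝ) * ((k : ℝ) + 1)) * W n (k + 1))
    (hWrec0 : ∀ n, W (n + 1) 0 = (r : ℝ) * W n 0) :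
    ∀ n : ℕ,
      RealRooted (∑ k ∈ Finset.range (n + 1), Polynomial.C (W n k) * Polynomial.X ^ k) := by
  intro n
  rcases Nat.eq_zero_or_pos m with hm | hm
  · -- m = 0 : polynomial is (X + r)^n
    subst hm
    have key : ∀ n, (∑ k ∈ Finset.range (n + 1), C (W n k) * X ^ k) = (X + C (r : ℝ)) ^ n := by
      intro n
      induction n with
      | zero => simp [hW0]
      | succ n ih =>
          rw [whitney_rec (r : ℝ) 0 W hWz (by intro n k; simpa using hWrec n k) hWrec0 n, ih]
          simp [pow_succ]
          ring
    right
    intro z hz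
    rw [key n] at hz
    simp only [map_pow, map_add, aeval_X, aeval_C] at hz
    rcases Nat.eq_zero_or_pos n with hn | hn
    · rw [hn, pow_zero] at hz; exact absurd hz one_ne_zero
    · have h0 : z + (algebraMap ℝ ℂ) (r : ℝ) = 0 := pow_eq_zero_iff (by omega) |>.mp hz
      have := congrArg Complex.im h0
      simpa using this
  rcases Nat.eq_zero_or_pos r with hr | hr
  · -- r = 0
    subst hr
    cases n with
    | zero =>
        left
        have : (∑ k ∈ Finset.range (0 + 1), C (W 0 k) * X ^ k) = 1 := by simp [hW0]
        rw [this, natDegree_one]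
    | succ n =>
        set W' : ℕ → ℕ → ℝ := fun a k => W (a + 1) (k + 1) with hW'def
        have hW'0 : ∀ k, W' 0 k = if k = 0 then 1 else 0 := by
          intro k
          cases k with
          | zero =>
              show W 1 1 = _
              rw [hWrec 0 0, hW0 0, hW0 1]
              norm_num
          | succ k =>
              show W 1 (k + 2) = _
              rw [hWz 1 (k + 2) (by omega)]
              simp
        have hW'z : ∀ a k, a < k → W' a k = 0 := fun a k h => hWz _ _ (by omega)
        have hW'rec : ∀ a k, W' (a + 1) (k + 1)
            = W' a k + ((m : ℝ) + (m : ℝ) * ((k : ℝ) + 1)) * W' a (k + 1) := by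
          intro a k
          show W (a + 2) (k + 2) = W (a + 1) (k + 1) + _ * W (a + 1) (k + 2)
          rw [hWrec (a + 1) (k + 1)]
          push_cast
          ring
        have hW'rec0 : ∀ a, W' (a + 1) 0 = (m : ℝ) * W' a 0 := by
          intro a
          show W (a + 2) 1 = (m : ℝ) * W (a + 1) 1
          rw [hWrec (a + 1) 0, hWrec0 a]
          push_cast
          ring
        have hmpos : (0 : ℝ) < (m : ℝ) := by exact_mod_cast hm
        obtain ⟨x, hneg, hmono, hprod⟩ :=
          whitney_prod (m : ℝ) (m : ℝ) hmpos hmpos W' hW'0 hW'z hW'rec hW'rec0 n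
        have hX : (∑ k ∈ Finset.range (n + 1 + 1), C (W (n + 1) k) * X ^ k)
            = X * ∏ i ∈ Finset.range n, (X - C (x i)) := by
          rw [← hprod]
          ext j
          rw [coeff_whitney W hWz]
          cases j with
          | zero =>
              rw [mul_comm, coeff_mul_X_zero, hWrec0 n]
              push_cast
              ring
          | succ k =>
              rw [mul_comm, coeff_mul_X, coeff_whitney W' hW'z]
        right
        intro z hz
        rw [hX] at hz
        rw [map_mul, aeval_X, mul_eq_zero] at hz
        rcases hz with hz | hz
        · rw [hz]; rfl
        · exact aeval_prod_im n x z hz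
  · -- m, r ≥ 1
    obtain ⟨x, hneg, hmono, hprod⟩ :=
      whitney_prod (r : ℝ) (m : ℝ) (by exact_mod_cast hr) (by exact_mod_cast hm) W hW0 hWz
        hWrec hWrec0 n
    right
    intro z hz
    rw [hprod] at hz
    exact aeval_prod_im n x z hz

end WhitneyAux
end

section
/- Let T = [t_{n,k}]_{n,k≥0} be defined by t_{0,0} = 1, t_{n,k} = a_n t_{n−1,k−1} + b_n t_{n−1,k} + c_n t_{n−2,k−1} (with t_{n,k} = 0 unless 0 ≤ k ≤ n). Then T = L(β) · blockdiag(1, D(α,γ)) · blockdiag(1, T), where L(β) is the lower triangular matrix with (n,k)-entry b_{k+1}b_{k+2}⋯b_n for n ≥ k (empty product = 1), and D(α,γ) is the lower bidiagonal matrix with diagonal a_1, a_2, … and subdiagonal c_2, c_3, …. -/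
/-- `L(β)`: lower triangular matrix with `(n,k)`-entry `b_{k+1} b_{k+2} ⋯ b_n`
for `n ≥ k` (empty product `= 1`). -/
def Lmat (b : ℕ → ℝ) : ℕ → ℕ → ℝ :=
  fun n k => if k ≤ n then ∏ i ∈ Finset.Icc (k + 1) n, b i else 0

/-- `D(α,γ)`: lower bidiagonal matrix with diagonal `a_1, a_2, …` and
subdiagonal `c_2, c_3, …`. -/
def Dmat (a c : ℕ → ℝ) : ℕ → ℕ → ℝ :=
  fun i j => if i = j then a (i + 1) else if i = j + 1 then c (i + 1) else 0


lemma key_step (b : ℕ → ℝ) (M : ℕ → ℕ → ℝ) (n k : ℕ) :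
    matMul (Lmat b) M (n+1) k = b (n+1) * matMul (Lmat b) M n k + M (n+1) k := by
  unfold matMul Lmat
  rw [Finset.sum_range_succ, Finset.mul_sum]
  have h1 : ((if n + 1 ≤ n + 1 then ∏ i ∈ Finset.Icc (n + 1 + 1) (n+1), b i else 0) : ℝ) = 1 := by
    rw [if_pos le_rfl, Finset.Icc_eq_empty (by omega), Finset.prod_empty]
  rw [h1, one_mul]
  congr 1
  apply Finset.sum_congr rfl
  intro i hi
  simp only [Finset.mem_range] at hi
  rw [if_pos (by omega), if_pos (by omega), Finset.prod_Icc_succ_top (by omega)]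
  ring

lemma M00 (a c : ℕ → ℝ) (T : ℕ → ℕ → ℝ) (hT : T 0 0 = 1) :
    matMul (blockOne (Dmat a c)) (blockOne T) 0 0 = 1 := by
  simp [matMul, blockOne]

lemma M0k (a c : ℕ → ℝ) (T : ℕ → ℕ → ℝ) (k : ℕ) :
    matMul (blockOne (Dmat a c)) (blockOne T) 0 (k+1) = 0 := by
  simp [matMul, blockOne]

lemma Mi0 (a c : ℕ → ℝ) (T : ℕ → ℕ → ℝ) (i : ℕ) :
    matMul (blockOne (Dmat a c)) (blockOne T) (i+1) 0 = 0 := by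
  unfold matMul
  apply Finset.sum_eq_zero
  intro j hj
  by_cases h : j = 0
  · simp [h, blockOne, Dmat]
  · simp [blockOne, h]

lemma M1k (a c : ℕ → ℝ) (T : ℕ → ℕ → ℝ) (k : ℕ) :
    matMul (blockOne (Dmat a c)) (blockOne T) 1 (k+1) = a 1 * T 0 k := by
  simp [matMul, Finset.sum_range_succ, blockOne, Dmat]

lemma Mik (a c : ℕ → ℝ) (T : ℕ → ℕ → ℝ) (i k : ℕ) :
    matMul (blockOne (Dmat a c)) (blockOne T) (i+2) (k+1)
      = a (i+2) * T (i+1) k + c (i+2) * T i k := by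
  unfold matMul
  rw [Finset.sum_range_succ, Finset.sum_range_succ]
  have hz : ∑ j ∈ Finset.range (i+1), blockOne (Dmat a c) (i+2) j * blockOne T j (k+1) = 0 := by
    apply Finset.sum_eq_zero
    intro j hj
    simp only [Finset.mem_range] at hj
    by_cases h : j = 0
    · simp [h, blockOne]
    · have : blockOne (Dmat a c) (i+2) j = 0 := by
        simp only [blockOne, Dmat]
        rw [if_neg (by omega), if_neg h, if_neg (by omega), if_neg (by omega)]
      simp [this]
  rw [hz, zero_add]
  simp only [blockOne, Dmat]
  norm_num
  ring

/-- The `n`-recursive matrix `T` defined by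
`t_{n,k} = a_n t_{n−1,k−1} + b_n t_{n−1,k} + c_n t_{n−2,k−1}` satisfies
`T = L(β) ⬝ blockdiag(1, D(α,γ)) ⬝ blockdiag(1, T)`. -/
theorem nRecursive_leftProduction (a b c : ℕ → ℝ) (T : ℕ → ℕ → ℝ)
    (h00 : T 0 0 = 1) (hz : ∀ n k, n < k → T n k = 0)
    (h10 : T 1 0 = b 1 * T 0 0)
    (h1k : ∀ k, T 1 (k + 1) = a 1 * T 0 k + b 1 * T 0 (k + 1))
    (hrec0 : ∀ n, T (n + 2) 0 = b (n + 2) * T (n + 1) 0)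
    (hrec : ∀ n k, T (n + 2) (k + 1) =
      a (n + 2) * T (n + 1) k + b (n + 2) * T (n + 1) (k + 1) + c (n + 2) * T n k) :
    ∀ n k, T n k = matMul (Lmat b) (matMul (blockOne (Dmat a c)) (blockOne T)) n k := by
  intro n
  induction n with
  | zero =>
    intro k
    have : matMul (Lmat b) (matMul (blockOne (Dmat a c)) (blockOne T)) 0 k
        = matMul (blockOne (Dmat a c)) (blockOne T) 0 k := by
      simp [matMul, Lmat]
    rw [this]
    match k with
    | 0 => rw [M00 a c T h00, h00]
    | k+1 => rw [M0k, hz 0 (k+1) (by omega)]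
  | succ n ih =>
    intro k
    rw [key_step, ← ih k]
    match n, k with
    | 0, 0 => rw [Mi0, h10, h00]; ring
    | 0, k+1 => rw [M1k, h1k]; ring
    | n+1, 0 => rw [Mi0, hrec0]; ring
    | n+1, k+1 => rw [Mik, hrec]; ring
end

section
/- Let T = [t_{n,k}]_{n,k≥0} satisfy t_{0,0} = 1 and t_{n,k} = a_n t_{n−1,k−1} + b_n t_{n−1,k} + c_n t_{n−2,k−1} with t_{n,k} = 0 unless 0 ≤ k ≤ n, where all a_n, b_n, c_n ≥ 0. Then for each n ≥ 0 the polynomial ∑_{k=0}^n t_{n,k} x^k is real-rooted. -/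
open Polynomial Complex

private lemma conj_aeval' (p : Polynomial ℝ) (z : ℂ) :
    Polynomial.aeval ((starRingEnd ℂ) z) p = (starRingEnd ℂ) (Polynomial.aeval z p) := by
  rw [Polynomial.aeval_def, Polynomial.aeval_def, Polynomial.hom_eval₂]
  congr 1
  ext x
  simp

private lemma keyStep' (a b c : ℝ) (ha : 0 ≤ a) (hb : 0 ≤ b) (hc : 0 ≤ c)
    (habc : ¬ (a = 0 ∧ b = 0 ∧ c = 0)) (z u v : ℂ) (hzi : 0 < z.im)
    (hu : u ≠ 0) (hv : v ≠ 0)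
    (h1 : (u * (starRingEnd ℂ) v).im ≤ 0)
    (h2 : 0 ≤ (z * (u * (starRingEnd ℂ) v)).im) :
    (((a:ℂ) * z + (b:ℂ)) * v + (c:ℂ) * z * u ≠ 0) ∧
    ((v * (starRingEnd ℂ) (((a:ℂ) * z + (b:ℂ)) * v + (c:ℂ) * z * u)).im ≤ 0) ∧
    (0 ≤ (z * (v * (starRingEnd ℂ) (((a:ℂ) * z + (b:ℂ)) * v + (c:ℂ) * z * u))).im) := by
  have hnv : 0 < v.re ^ 2 + v.im ^ 2 := by
    have : v.re ≠ 0 ∨ v.im ≠ 0 := by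
      by_contra hcon
      push_neg at hcon
      exact hv (Complex.ext hcon.1 hcon.2)
    rcases this with h | h <;> positivity
  simp only [Complex.add_im, Complex.add_re, Complex.mul_im, Complex.mul_re,
    Complex.conj_re, Complex.conj_im, Complex.ofReal_re, Complex.ofReal_im] at h1 h2 ⊢
  refine ⟨?_, ?_, ?_⟩
  · intro hw
    have hw' := hw
    rw [Complex.ext_iff] at hw'
    simp only [Complex.add_im, Complex.add_re, Complex.mul_im, Complex.mul_re,
      Complex.ofReal_re, Complex.ofReal_im, Complex.zero_re, Complex.zero_im] at hw'
    obtain ⟨hwre, hwim⟩ := hw'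
    have hK : a * (z.im * (v.re ^ 2 + v.im ^ 2))
        + c * (z.re * (u.im * v.re - u.re * v.im) + z.im * (u.re * v.re + u.im * v.im)) = 0 := by
      linear_combination (-v.im) * hwre + v.re * hwim
    have hK2 : b * (z.im * (v.re ^ 2 + v.im ^ 2))
        + c * ((z.re ^ 2 + z.im ^ 2) * (-(u.im * v.re - u.re * v.im))) = 0 := by
      linear_combination (z.im * v.re + z.re * v.im) * hwre - (z.re * v.re - z.im * v.im) * hwim
    have ha0 : a = 0 := by
      refine le_antisymm ?_ ha
      nlinarith [mul_pos hzi hnv, mul_nonneg hc h2]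
    have hb0 : b = 0 := by
      refine le_antisymm ?_ hb
      nlinarith [mul_pos hzi hnv,
        mul_nonneg hc (mul_nonneg (by positivity : (0:ℝ) ≤ z.re ^ 2 + z.im ^ 2)
          (neg_nonneg.2 h1))]
    have hcu : (c:ℂ) * z * u = 0 := by
      rw [ha0, hb0] at hw
      simpa using hw
    rcases mul_eq_zero.mp hcu with h | h
    · rcases mul_eq_zero.mp h with h | h
      · exact habc ⟨ha0, hb0, by exact_mod_cast h⟩
      · exact hzi.ne' (by rw [h]; simp)
    · exact hu h
  · nlinarith [mul_nonneg ha (mul_nonneg hzi.le hnv.le), mul_nonneg hc h2]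
  · nlinarith [mul_nonneg hb (mul_nonneg hzi.le hnv.le),
      mul_nonneg hc (mul_nonneg (by positivity : (0:ℝ) ≤ z.re ^ 2 + z.im ^ 2) (neg_nonneg.2 h1))]

private lemma linStep' (a b : ℝ) (ha : 0 ≤ a) (hb : 0 ≤ b)
    (hab : ¬ (a = 0 ∧ b = 0)) (z u : ℂ) (hzi : 0 < z.im) (hu : u ≠ 0) :
    (((a:ℂ) * z + (b:ℂ)) * u ≠ 0) ∧
    ((u * (starRingEnd ℂ) (((a:ℂ) * z + (b:ℂ)) * u)).im ≤ 0) ∧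
    (0 ≤ (z * (u * (starRingEnd ℂ) (((a:ℂ) * z + (b:ℂ)) * u))).im) := by
  have hnu : 0 < u.re ^ 2 + u.im ^ 2 := by
    have : u.re ≠ 0 ∨ u.im ≠ 0 := by
      by_contra hcon; push_neg at hcon; exact hu (Complex.ext hcon.1 hcon.2)
    rcases this with h | h <;> positivity
  have hne : (a:ℂ) * z + (b:ℂ) ≠ 0 := by
    intro h
    rcases eq_or_ne a 0 with ha0 | ha0
    · rw [ha0] at h
      simp only [Complex.ofReal_zero, zero_mul, zero_add] at h
      exact hab ⟨ha0, by exact_mod_cast h⟩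
    · have := congrArg Complex.im h
      simp only [Complex.add_im, Complex.mul_im, Complex.ofReal_re, Complex.ofReal_im,
        Complex.zero_im] at this
      have : a * z.im = 0 := by linarith
      rcases mul_eq_zero.mp this with h' | h'
      · exact ha0 h'
      · exact hzi.ne' h'
  refine ⟨mul_ne_zero hne hu, ?_, ?_⟩ <;>
  · simp only [Complex.add_im, Complex.add_re, Complex.mul_im, Complex.mul_re,
      Complex.conj_re, Complex.conj_im, Complex.ofReal_re, Complex.ofReal_im]
    nlinarith [mul_nonneg ha (mul_nonneg hzi.le hnu.le),
      mul_nonneg hb (mul_nonneg hzi.le hnu.le)]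

/-- The pair invariant: for consecutive row polynomials, either one vanishes
identically, or both are zero-free on the upper half-plane with a
Herglotz-type condition on their ratio. -/
def PairInv (P Q : Polynomial ℝ) : Prop :=
  (P = 0 ∧ Q = 0) ∨
  (P = 0 ∧ ∀ z : ℂ, 0 < z.im → Polynomial.aeval z Q ≠ 0) ∨
  (Q = 0 ∧ ∀ z : ℂ, 0 < z.im → Polynomial.aeval z P ≠ 0) ∨
  (∀ z : ℂ, 0 < z.im → Polynomial.aeval z P ≠ 0 ∧ Polynomial.aeval z Q ≠ 0 ∧
     (Polynomial.aeval z P * (starRingEnd ℂ) (Polynomial.aeval z Q)).im ≤ 0 ∧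
     0 ≤ (z * (Polynomial.aeval z P * (starRingEnd ℂ) (Polynomial.aeval z Q))).im)

private lemma aeval_next' (a b c : ℝ) (P Q : Polynomial ℝ) (z : ℂ) :
    Polynomial.aeval z ((C a * X + C b) * Q + C c * (X * P))
      = ((a:ℂ) * z + (b:ℂ)) * Polynomial.aeval z Q + (c:ℂ) * z * Polynomial.aeval z P := by
  simp only [map_add, map_mul, Polynomial.aeval_C, Polynomial.aeval_X,
    Complex.coe_algebraMap]
  ring

private lemma pairInv_step' (a b c : ℝ) (ha : 0 ≤ a) (hb : 0 ≤ b) (hc : 0 ≤ c)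
    (P Q : Polynomial ℝ) (h : PairInv P Q) :
    PairInv Q ((C a * X + C b) * Q + C c * (X * P)) := by
  rcases h with ⟨hP, hQ⟩ | ⟨hP, hQf⟩ | ⟨hQ, hPf⟩ | hN
  · left
    constructor
    · exact hQ
    · rw [hP, hQ]; simp
  · by_cases hab : a = 0 ∧ b = 0
    · right; right; left
      constructor
      · rw [hab.1, hab.2, hP]; simp
      · exact hQf
    · right; right; right
      intro z hz
      have hu := hQf z hz
      have ls := linStep' a b ha hb hab z (Polynomial.aeval z Q) hz hu
      rw [aeval_next', hP, map_zero, mul_zero, add_zero]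
      exact ⟨hu, ls.1, ls.2.1, ls.2.2⟩
  · by_cases hc0 : c = 0
    · left
      constructor
      · exact hQ
      · rw [hQ, hc0]; simp
    · right; left
      constructor
      · exact hQ
      · intro z hz
        rw [aeval_next', hQ, map_zero, mul_zero, zero_add]
        have hzne : z ≠ 0 := fun h => hz.ne' (by rw [h]; simp)
        exact mul_ne_zero (mul_ne_zero (by exact_mod_cast hc0) hzne) (hPf z hz)
  · by_cases habc : a = 0 ∧ b = 0 ∧ c = 0
    · right; right; left
      constructor
      · rw [habc.1, habc.2.1, habc.2.2]; simp
      · exact fun z hz => (hN z hz).2.1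
    · right; right; right
      intro z hz
      obtain ⟨hu, hv, h1, h2⟩ := hN z hz
      have ks := keyStep' a b c ha hb hc habc z (Polynomial.aeval z P)
        (Polynomial.aeval z Q) hz hu hv h1 h2
      rw [aeval_next']
      exact ⟨hv, ks.1, ks.2.1, ks.2.2⟩

/-- The `n`-th row polynomial. -/
noncomputable def rowPoly (T : ℕ → ℕ → ℝ) (n : ℕ) : Polynomial ℝ :=
  ∑ k ∈ Finset.range (n + 1), Polynomial.C (T n k) * Polynomial.X ^ k

private lemma coeff_rowPoly (T : ℕ → ℕ → ℝ) (hz : ∀ n k, n < k → T n k = 0)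
    (n k : ℕ) : (rowPoly T n).coeff k = T n k := by
  rw [rowPoly, Polynomial.finset_sum_coeff]
  simp only [Polynomial.coeff_C_mul, Polynomial.coeff_X_pow, mul_ite, mul_one, mul_zero]
  rw [Finset.sum_ite_eq (Finset.range (n + 1)) k (fun j => T n j)]
  by_cases hk : k ∈ Finset.range (n + 1)
  · rw [if_pos hk]
  · rw [if_neg hk]
    rw [Finset.mem_range, not_lt] at hk
    exact (hz n k (by omega)).symm

private lemma coeff_next (a b c : ℝ) (P Q : Polynomial ℝ) (k : ℕ) :
    ((C a * X + C b) * Q + C c * (X * P)).coeff k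
      = (match k with
        | 0 => b * Q.coeff 0
        | (k + 1) => a * Q.coeff k + b * Q.coeff (k + 1) + c * P.coeff k) := by
  have hrw : (C a * X + C b) * Q + C c * (X * P)
      = C a * (X * Q) + C b * Q + C c * (X * P) := by ring
  rw [hrw]
  match k with
  | 0 =>
    simp only [Polynomial.coeff_add, Polynomial.coeff_C_mul, Polynomial.mul_coeff_zero,
      Polynomial.coeff_X_zero, Polynomial.coeff_C_zero, zero_mul, mul_zero, zero_add, add_zero]
  | (k + 1) =>
    simp only [Polynomial.coeff_add, Polynomial.coeff_C_mul, Polynomial.coeff_X_mul]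

private lemma rowPoly_one (a b c : ℕ → ℝ) (T : ℕ → ℕ → ℝ)
    (hz : ∀ n k, n < k → T n k = 0)
    (h10 : T 1 0 = b 1 * T 0 0)
    (h1k : ∀ k, T 1 (k + 1) = a 1 * T 0 k + b 1 * T 0 (k + 1)) :
    rowPoly T 1 = (C (a 1) * X + C (b 1)) * rowPoly T 0 + C (c 1) * (X * 0) := by
  ext k
  rw [coeff_rowPoly T hz, coeff_next]
  match k with
  | 0 => simpa [coeff_rowPoly T hz] using h10
  | (k + 1) => simpa [coeff_rowPoly T hz] using h1k k

private lemma rowPoly_rec (a b c : ℕ → ℝ) (T : ℕ → ℕ → ℝ)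
    (hz : ∀ n k, n < k → T n k = 0)
    (hrec0 : ∀ n, T (n + 2) 0 = b (n + 2) * T (n + 1) 0)
    (hrec : ∀ n k, T (n + 2) (k + 1) =
      a (n + 2) * T (n + 1) k + b (n + 2) * T (n + 1) (k + 1) + c (n + 2) * T n k)
    (n : ℕ) :
    rowPoly T (n + 2) = (C (a (n + 2)) * X + C (b (n + 2))) * rowPoly T (n + 1)
      + C (c (n + 2)) * (X * rowPoly T n) := by
  ext k
  rw [coeff_rowPoly T hz, coeff_next]
  match k with
  | 0 => simpa [coeff_rowPoly T hz] using hrec0 n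
  | (k + 1) => simpa [coeff_rowPoly T hz] using hrec n k


/-- For an `n`-recursive matrix `T` given by
`t_{n,k} = a_n t_{n−1,k−1} + b_n t_{n−1,k} + c_n t_{n−2,k−1}` with nonnegative
coefficient sequences, every row polynomial `∑_{k=0}^n t_{n,k} x^k` is
real-rooted. -/
theorem nRecursive_realRooted (a b c : ℕ → ℝ) (T : ℕ → ℕ → ℝ)
    (ha : ∀ n, 0 ≤ a n) (hb : ∀ n, 0 ≤ b n) (hc : ∀ n, 0 ≤ c n)
    (h00 : T 0 0 = 1) (hz : ∀ n k, n < k → T n k = 0)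
    (h10 : T 1 0 = b 1 * T 0 0)
    (h1k : ∀ k, T 1 (k + 1) = a 1 * T 0 k + b 1 * T 0 (k + 1))
    (hrec0 : ∀ n, T (n + 2) 0 = b (n + 2) * T (n + 1) 0)
    (hrec : ∀ n k, T (n + 2) (k + 1) =
      a (n + 2) * T (n + 1) k + b (n + 2) * T (n + 1) (k + 1) + c (n + 2) * T n k) :
    ∀ n : ℕ,
      RealRooted (∑ k ∈ Finset.range (n + 1), Polynomial.C (T n k) * Polynomial.X ^ k) := by
  have base0 : PairInv 0 (rowPoly T 0) := by
    right; left
    refine ⟨rfl, fun z hzim => ?_⟩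
    rw [rowPoly]
    simp [h00]
  have key : ∀ n, PairInv (rowPoly T n) (rowPoly T (n + 1)) := by
    intro n
    induction n with
    | zero =>
      rw [rowPoly_one a b c T hz h10 h1k]
      exact pairInv_step' (a 1) (b 1) (c 1) (ha 1) (hb 1) (hc 1) 0 (rowPoly T 0) base0
    | succ m ih =>
      rw [rowPoly_rec a b c T hz hrec0 hrec m]
      exact pairInv_step' (a (m + 2)) (b (m + 2)) (c (m + 2))
        (ha (m + 2)) (hb (m + 2)) (hc (m + 2)) (rowPoly T m) (rowPoly T (m + 1)) ih
  have main : ∀ n, rowPoly T n = 0 ∨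
      ∀ z : ℂ, 0 < z.im → Polynomial.aeval z (rowPoly T n) ≠ 0 := by
    intro n
    rcases key n with ⟨h1', _⟩ | ⟨h1', _⟩ | ⟨_, h2'⟩ | hN
    · exact Or.inl h1'
    · exact Or.inl h1'
    · exact Or.inr h2'
    · exact Or.inr fun z hzim => (hN z hzim).1
  intro n
  show RealRooted (rowPoly T n)
  rcases main n with h0 | hf
  · rw [h0]
    exact Or.inl Polynomial.natDegree_zero
  · right
    intro z hz0
    rcases lt_trichotomy z.im 0 with him | him | him
    · exfalso
      have hconj : Polynomial.aeval ((starRingEnd ℂ) z) (rowPoly T n) = 0 := by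
        rw [conj_aeval', hz0, map_zero]
      have : 0 < ((starRingEnd ℂ) z).im := by
        rw [Complex.conj_im]; linarith
      exact hf _ this hconj
    · exact him
    · exact absurd hz0 (hf z him)
end

section
/- Let T = [t_{n,k}]_{n,k≥0} satisfy t_{0,0} = 1 and t_{n,k} = a_n t_{n−1,k−1} + b_n t_{n−1,k} + c_n t_{n−2,k−1} with t_{n,k} = 0 unless 0 ≤ k ≤ n, where all a_n, b_n, c_n ≥ 0. Then T is totally positive, i.e., every minor of T is nonnegative. -/
/-!
Generalize from minors of `T` to determinants whose rows are rows `R n` of `T` or their right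
shifts `S R n`, listed as `R n₁, …, R nₚ, S R m₁, …, S R m_q` with `n₁ < ⋯ < nₚ`,
`m₁ < ⋯ < m_q` and `nₚ ≤ m₁ + 1`. Expanding the last unshifted row
`R n = aₙ S R (n-1) + bₙ R (n-1) + cₙ S R (n-2)` by multilinearity gives nonnegative multiples of
determinants of the same shape, or with a repeated row. When all rows are shifted, deleting the
shift gives an ordinary minor; when the last unshifted row is `R 0`, it is the first row and
`R 0 = T 0 0 • e₀`, so Laplace expansion removes it. Each step lowers the total weight of the rows
in the interleaving `R 0 < S R 0 < R 1 < S R 1 < ⋯`.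
-/

namespace NRecursive

inductive GenRow
  | row (n : ℕ)
  | shift (n : ℕ)

namespace GenRow

@[simp]
def eval (T : ℕ → ℕ → ℝ) : GenRow → ℕ → ℝ
  | row n, x => T n x
  | shift _, 0 => 0
  | shift n, x + 1 => T n x

@[simp]
def weight : GenRow → ℕ
  | row n => 2 * n + 1
  | shift n => 2 * n + 2

@[simp]
def Precedes : GenRow → GenRow → Prop
  | row n, row n' => n < n'
  | row n, shift m => n ≤ m + 1
  | shift _, row _ => False
  | shift m, shift m' => m < m'

end GenRow

open GenRow

def genMinor (T : ℕ → ℕ → ℝ) {k : ℕ} (r : Fin k → GenRow) (g : Fin k → ℕ) :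
    Matrix (Fin k) (Fin k) ℝ :=
  Matrix.of fun i j => (r i).eval T (g j)

def Admissible {k : ℕ} (r : Fin k → GenRow) : Prop :=
  ∀ i j, i < j → (r i).Precedes (r j)

def MinorsNonnegBelow (T : ℕ → ℕ → ℝ) (N : ℕ) : Prop :=
  ∀ (k : ℕ) (r : Fin k → GenRow) (g : Fin k → ℕ),
    ∑ i, (r i).weight < N → Admissible r → StrictMono g → 0 ≤ (genMinor T r g).det

section

variable {T : ℕ → ℕ → ℝ} {k : ℕ} {r : Fin k → GenRow} {g : Fin k → ℕ}

lemma Admissible.update (hr : Admissible r) {p : Fin k} {v : GenRow}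
    (hlt : ∀ i, i < p → (r i).Precedes v) (hgt : ∀ j, p < j → v.Precedes (r j)) :
    Admissible (Function.update r p v) := by
  intro i j hij
  rcases eq_or_ne i p with rfl | hi
  · simpa [hij.ne'] using hgt j hij
  rcases eq_or_ne j p with rfl | hj
  · simpa [hi] using hlt i hij
  simpa [hi, hj] using hr i j hij

lemma Admissible.exists_row_of_lt (hr : Admissible r) {p i : Fin k} {n : ℕ} (hp : r p = row n)
    (hi : i < p) : ∃ n', n' < n ∧ r i = row n' := by
  have := hr i p hi
  rw [hp] at this
  cases hri : r i <;> simp_all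

lemma Admissible.exists_shift_of_gt (hr : Admissible r) {p j : Fin k} {n : ℕ}
    (hp : r p = row n) (htail : ∀ j, p < j → ∃ m, r j = shift m) (hj : p < j) :
    ∃ m, n ≤ m + 1 ∧ r j = shift m := by
  obtain ⟨m, hm⟩ := htail j hj
  have := hr p j hj
  rw [hp, hm] at this
  exact ⟨m, this, hm⟩

lemma genMinor_updateRow (p : Fin k) (v : GenRow) :
    (genMinor T r g).updateRow p (fun j => v.eval T (g j))
      = genMinor T (Function.update r p v) g := by
  ext i j
  rcases eq_or_ne i p with rfl | hi <;> simp [genMinor, Matrix.updateRow_apply, *]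

lemma exists_last_row (h : ¬ ∀ i, ∃ m, r i = shift m) :
    ∃ p n, r p = row n ∧ ∀ j, p < j → ∃ m, r j = shift m := by
  classical
  push Not at h
  obtain ⟨i, hi⟩ := h
  obtain ⟨p, hp, hmax⟩ :=
    (Finset.univ.filter fun i => ∀ m, r i ≠ shift m).exists_max_image id ⟨i, by simpa using hi⟩
  simp only [Finset.mem_filter, Finset.mem_univ, true_and, id] at hp hmax
  cases hrp : r p with
  | row n =>
    refine ⟨p, n, hrp, fun j hj => ?_⟩
    by_contra hjs
    push Not at hjs
    exact (hmax j hjs).not_gt hj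
  | shift m => exact absurd hrp (hp m)

lemma det_genMinor_update_nonneg (ih : MinorsNonnegBelow T (∑ i, (r i).weight))
    (hr : Admissible r) (hg : StrictMono g) {p : Fin k} {v : GenRow}
    (hv : v.weight < (r p).weight) (hlt : ∀ i, i < p → r i = v ∨ (r i).Precedes v)
    (hgt : ∀ j, p < j → r j = v ∨ v.Precedes (r j)) :
    0 ≤ (genMinor T (Function.update r p v) g).det := by
  by_cases hdup : ∃ i, i ≠ p ∧ r i = v
  · obtain ⟨i, hip, hi⟩ := hdup
    rw [Matrix.det_zero_of_row_eq hip]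
    ext j
    simp [genMinor, hip, hi]
  push Not at hdup
  refine ih _ _ _ ?_ (hr.update (fun i hi => (hlt i hi).resolve_left (hdup i hi.ne))
    (fun j hj => (hgt j hj).resolve_left (hdup j hj.ne'))) hg
  refine Finset.sum_lt_sum (fun i _ => ?_) ⟨p, Finset.mem_univ p, by simpa using hv⟩
  rcases eq_or_ne i p with rfl | hi
  · simpa using hv.le
  · simp [hi]

lemma det_nonneg_of_forall_shift (ih : MinorsNonnegBelow T (∑ i, (r i).weight))
    (hr : Admissible r) (hg : StrictMono g) (hk : 0 < k) (hall : ∀ i, ∃ m, r i = shift m) :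
    0 ≤ (genMinor T r g).det := by
  choose m hm using hall
  obtain rfl : r = fun i => shift (m i) := funext hm
  by_cases hg0 : ∃ j, g j = 0
  · obtain ⟨j, hj⟩ := hg0
    rw [Matrix.det_eq_zero_of_column_eq_zero j (fun i => by simp [genMinor, hj])]
  push Not at hg0
  have hunshift : genMinor T (fun i => shift (m i)) g
      = genMinor T (fun i => row (m i)) (fun j => g j - 1) := by
    ext i j
    obtain ⟨x, hx⟩ := Nat.exists_eq_add_one_of_ne_zero (hg0 j)
    simp [genMinor, hx]
  rw [hunshift]
  refine ih _ _ _ (Finset.sum_lt_sum_of_nonempty ⟨⟨0, hk⟩, Finset.mem_univ _⟩ (by simp))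
    (fun i j hij => by simpa using hr i j hij) (fun i j hij => ?_)
  have := hg hij
  have := hg0 i
  omega

lemma det_nonneg_of_last_row_zero (h0 : 0 ≤ T 0 0) (hz0 : ∀ x, 0 < x → T 0 x = 0)
    (ih : MinorsNonnegBelow T (∑ i, (r i).weight)) (hr : Admissible r) (hg : StrictMono g)
    {p : Fin k} (hp : r p = row 0) (htail : ∀ j, p < j → ∃ m, r j = shift m) :
    0 ≤ (genMinor T r g).det := by
  obtain ⟨k, rfl⟩ := Nat.exists_eq_add_one_of_ne_zero p.pos.ne'
  obtain rfl : p = 0 := by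
    by_contra hp0
    obtain ⟨n', hn', -⟩ := hr.exists_row_of_lt hp (Fin.pos_iff_ne_zero.mpr hp0)
    exact Nat.not_lt_zero _ hn'
  rcases Nat.eq_zero_or_pos (g 0) with hg0 | hg0
  · have hcol : ∀ i : Fin k, genMinor T r g i.succ 0 = 0 := fun i => by
      obtain ⟨m, hm⟩ := htail i.succ i.succ_pos
      simp [genMinor, hm, hg0]
    rw [Matrix.det_succ_column_zero, Fin.sum_univ_succ]
    simp only [hcol, mul_zero, zero_mul, Finset.sum_const_zero, add_zero, Fin.succAbove_zero]
    refine mul_nonneg (by simpa [genMinor, hp, hg0] using h0)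
      (ih _ (r ∘ Fin.succ) (g ∘ Fin.succ) ?_ (fun i j hij => hr _ _ (Fin.succ_lt_succ_iff.mpr hij))
        (hg.comp Fin.strictMono_succ))
    rw [Fin.sum_univ_succ, hp]
    simp
  · rw [Matrix.det_eq_zero_of_row_eq_zero 0 fun j => by
      simpa [genMinor, hp] using hz0 _ (hg0.trans_le (hg.monotone (Fin.zero_le j)))]

lemma det_nonneg_of_last_row_succ {a b c : ℕ → ℝ}
    (ha : ∀ n, 0 ≤ a n) (hb : ∀ n, 0 ≤ b n) (hc : ∀ n, 0 ≤ c n)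
    (hrow1 : ∀ x, T 1 x = a 1 * (shift 0).eval T x + b 1 * T 0 x)
    (hrow2 : ∀ n x, T (n + 2) x = a (n + 2) * (shift (n + 1)).eval T x
      + b (n + 2) * T (n + 1) x + c (n + 2) * (shift n).eval T x)
    (ih : MinorsNonnegBelow T (∑ i, (r i).weight)) (hr : Admissible r) (hg : StrictMono g)
    {p : Fin k} {n : ℕ} (hp : r p = row (n + 1)) (htail : ∀ j, p < j → ∃ m, r j = shift m) :
    0 ≤ (genMinor T r g).det := by
  have term (v : GenRow) (hv : v.weight < (row (n + 1)).weight)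
      (hlt : ∀ n', n' ≤ n → row n' = v ∨ (row n').Precedes v)
      (hgt : ∀ m, n ≤ m → shift m = v ∨ v.Precedes (shift m)) :
      0 ≤ (genMinor T (Function.update r p v) g).det := by
    refine det_genMinor_update_nonneg ih hr hg (hp ▸ hv)
      (fun i hi => ?_) (fun j hj => ?_)
    · obtain ⟨n', hn', hri⟩ := hr.exists_row_of_lt hp hi
      exact hri ▸ hlt n' (Nat.lt_succ_iff.mp hn')
    · obtain ⟨m, hm, hrj⟩ := hr.exists_shift_of_gt hp htail hj
      exact hrj ▸ hgt m (by omega)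
  have hA := term (shift n) (by simp only [weight]; omega) (fun n' _ => by simp; omega)
    (fun m _ => by simp; omega)
  have hB := term (row n) (by simp only [weight]; omega) (fun n' _ => by simp; omega)
    (fun m _ => by simp; omega)
  cases n with
  | zero =>
    have hM : genMinor T r g p = a 1 • (fun j => (shift 0).eval T (g j))
        + b 1 • (fun j => (row 0).eval T (g j)) := by
      ext j
      simp [genMinor, hp, hrow1]
    rw [← Matrix.updateRow_eq_self (genMinor T r g) p, hM]
    simp only [Matrix.det_updateRow_add, Matrix.det_updateRow_smul, genMinor_updateRow]
    exact add_nonneg (mul_nonneg (ha 1) hA) (mul_nonneg (hb 1) hB)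
  | succ n =>
    have hC := term (shift n) (by simp only [weight]; omega) (fun n' _ => by simp; omega)
      (fun m _ => by simp; omega)
    have hM : genMinor T r g p = a (n + 2) • (fun j => (shift (n + 1)).eval T (g j))
        + b (n + 2) • (fun j => (row (n + 1)).eval T (g j))
        + c (n + 2) • (fun j => (shift n).eval T (g j)) := by
      ext j
      simp [genMinor, hp, hrow2]
    rw [← Matrix.updateRow_eq_self (genMinor T r g) p, hM]
    simp only [Matrix.det_updateRow_add, Matrix.det_updateRow_smul, genMinor_updateRow]
    exact add_nonneg (add_nonneg (mul_nonneg (ha _) hA) (mul_nonneg (hb _) hB))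
      (mul_nonneg (hc _) hC)

theorem minorsNonnegBelow {a b c : ℕ → ℝ}
    (ha : ∀ n, 0 ≤ a n) (hb : ∀ n, 0 ≤ b n) (hc : ∀ n, 0 ≤ c n)
    (h0 : 0 ≤ T 0 0) (hz0 : ∀ x, 0 < x → T 0 x = 0)
    (hrow1 : ∀ x, T 1 x = a 1 * (shift 0).eval T x + b 1 * T 0 x)
    (hrow2 : ∀ n x, T (n + 2) x = a (n + 2) * (shift (n + 1)).eval T x
      + b (n + 2) * T (n + 1) x + c (n + 2) * (shift n).eval T x)
    (N : ℕ) : MinorsNonnegBelow T N := by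
  induction N with
  | zero => exact fun _ _ _ h => absurd h (Nat.not_lt_zero _)
  | succ N ih =>
    intro k r g hw hr hg
    have ih' : MinorsNonnegBelow T (∑ i, (r i).weight) :=
      fun k' r' g' hw' => ih k' r' g' (hw'.trans_le (Nat.lt_succ_iff.mp hw))
    rcases Nat.eq_zero_or_pos k with rfl | hk
    · simp
    by_cases hall : ∀ i, ∃ m, r i = shift m
    · exact det_nonneg_of_forall_shift ih' hr hg hk hall
    obtain ⟨p, n, hp, htail⟩ := exists_last_row hall
    cases n with
    | zero => exact det_nonneg_of_last_row_zero h0 hz0 ih' hr hg hp htail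
    | succ n => exact det_nonneg_of_last_row_succ ha hb hc hrow1 hrow2 ih' hr hg hp htail

end

end NRecursive

open NRecursive GenRow

/-- An `n`-recursive matrix `T` given by
`t_{n,k} = a_n t_{n−1,k−1} + b_n t_{n−1,k} + c_n t_{n−2,k−1}` with nonnegative
coefficient sequences is totally positive. -/
theorem nRecursive_totallyPos (a b c : ℕ → ℝ) (T : ℕ → ℕ → ℝ)
    (ha : ∀ n, 0 ≤ a n) (hb : ∀ n, 0 ≤ b n) (hc : ∀ n, 0 ≤ c n)
    (h00 : T 0 0 = 1) (hz : ∀ n k, n < k → T n k = 0)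
    (h10 : T 1 0 = b 1 * T 0 0)
    (h1k : ∀ k, T 1 (k + 1) = a 1 * T 0 k + b 1 * T 0 (k + 1))
    (hrec0 : ∀ n, T (n + 2) 0 = b (n + 2) * T (n + 1) 0)
    (hrec : ∀ n k, T (n + 2) (k + 1) =
      a (n + 2) * T (n + 1) k + b (n + 2) * T (n + 1) (k + 1) + c (n + 2) * T n k) :
    TotallyPos T := by
  intro k f g hf hg
  have hrow1 : ∀ x, T 1 x = a 1 * (shift 0).eval T x + b 1 * T 0 x := by
    rintro (_ | x) <;> simp [h10, h1k]
  have hrow2 : ∀ n x, T (n + 2) x = a (n + 2) * (shift (n + 1)).eval T x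
      + b (n + 2) * T (n + 1) x + c (n + 2) * (shift n).eval T x := by
    rintro n (_ | x) <;> simp [hrec0, hrec]
  exact minorsNonnegBelow ha hb hc (h00 ▸ zero_le_one) (fun x => hz 0 x) hrow1 hrow2 _ k
    (fun i => row (f i)) g (Nat.lt_succ_self _) (fun i j hij => hf hij) hg
end

section
/- Let T = [t_{n,k}] satisfy t_{0,0} = 1, t_{n,k} = a_n t_{n−1,k−1} + b_n t_{n−1,k} + c_n t_{n−2,k−1} (t_{n,k} = 0 unless 0 ≤ k ≤ n) with all a_n, b_n, c_n ≥ 0. Then the reversal matrix [t_{n,n−k}]_{n,k≥0} (entry 0 when k > n) is totally positive. -/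
open Matrix

def MaxMinorsNonneg {s : ℕ} (v : Fin s → ℕ → ℝ) : Prop :=
  ∀ f : Fin s → ℕ, StrictMono f → 0 ≤ det (of fun i j => v j (f i))

def PreservesMaxMinorsNonneg (L : (ℕ → ℝ) → ℕ → ℝ) : Prop :=
  ∀ (s : ℕ) (v : Fin s → ℕ → ℝ), MaxMinorsNonneg v → MaxMinorsNonneg fun j => L (v j)

namespace PreservesMaxMinorsNonneg

variable {L L' : (ℕ → ℝ) → ℕ → ℝ}

theorem comp (hL : PreservesMaxMinorsNonneg L) (hL' : PreservesMaxMinorsNonneg L') :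
    PreservesMaxMinorsNonneg (L ∘ L') :=
  fun s v hv => hL s _ (hL' s v hv)

theorem iterate (hL : PreservesMaxMinorsNonneg L) (k : ℕ) :
    PreservesMaxMinorsNonneg L^[k] := by
  induction k with
  | zero => exact fun _ _ hv => hv
  | succ k ih => rw [Function.iterate_succ]; exact ih.comp hL

end PreservesMaxMinorsNonneg

theorem MaxMinorsNonneg.det_nonneg_of_monotone {s : ℕ} {v : Fin s → ℕ → ℝ}
    (hv : MaxMinorsNonneg v) {ρ : Fin s → ℕ} (hρ : Monotone ρ) :
    0 ≤ det (of fun i j => v j (ρ i)) := by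
  by_cases hinj : Function.Injective ρ
  · exact hv ρ (hρ.strictMono_of_injective hinj)
  · obtain ⟨i, i', hii', hne⟩ := Function.not_injective_iff.mp hinj
    exact (det_zero_of_row_eq hne (funext fun j => by simp [hii'])).ge

/-- The lower bidiagonal matrix with diagonal `β` and subdiagonal `γ` applied to a column; in row
`0` the truncated `0 - 1 = 0` adds `γ 0` to the diagonal, which does not affect total positivity. -/
def lowerBidiag (β γ : ℕ → ℝ) (x : ℕ → ℝ) (n : ℕ) : ℝ :=
  β n * x n + γ n * x (n - 1)

theorem preserves_lowerBidiag {β γ : ℕ → ℝ} (hβ : ∀ n, 0 ≤ β n) (hγ : ∀ n, 0 ≤ γ n) :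
    PreservesMaxMinorsNonneg (lowerBidiag β γ) := by
  intro s v hv f hf
  let row : ℕ → Fin s → ℝ := fun m j => v j m
  have hsplit : (of fun i j => lowerBidiag β γ (v j) (f i)) =
      (fun i => β (f i) • row (f i)) + (fun i => γ (f i) • row (f i - 1)) := by
    ext i j
    simp [lowerBidiag, row]
  change 0 ≤ detRowAlternating _
  rw [hsplit, AlternatingMap.map_add_univ]
  refine Finset.sum_nonneg fun S _ => ?_
  let ρ : Fin s → ℕ := fun i => if i ∈ S then f i else f i - 1
  have hρ : Monotone ρ := by
    intro i i' hii'
    rcases hii'.eq_or_lt with rfl | hlt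
    · exact le_rfl
    · have := hf hlt
      simp only [ρ]
      split_ifs <;> omega
  have hpiece : S.piecewise (fun i => β (f i) • row (f i)) (fun i => γ (f i) • row (f i - 1)) =
      fun i => (if i ∈ S then β (f i) else γ (f i)) • row (ρ i) := by
    ext i
    by_cases hi : i ∈ S <;> simp [hi, ρ]
  rw [hpiece, AlternatingMap.map_smul_univ]
  refine smul_nonneg (Finset.prod_nonneg fun i _ => ?_) (hv.det_nonneg_of_monotone hρ)
  split_ifs
  exacts [hβ _, hγ _]

def shift (x : ℕ → ℝ) : ℕ → ℝ
  | 0 => 0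
  | n + 1 => x n

theorem preserves_shift : PreservesMaxMinorsNonneg shift := by
  have : shift = lowerBidiag 0 fun n => if n = 0 then 0 else 1 := by
    ext x (_ | n) <;> simp [shift, lowerBidiag]
  rw [this]
  exact preserves_lowerBidiag (fun _ => le_rfl) fun n => by split_ifs <;> norm_num

/-- The solution `y` of `y n = x n + a n * y (n - 1)`, i.e. `(I - a·Z)⁻¹ x` for the shift `Z`. -/
def solve (a : ℕ → ℝ) (x : ℕ → ℝ) : ℕ → ℝ
  | 0 => x 0
  | n + 1 => x (n + 1) + a (n + 1) * solve a x n

theorem preserves_solve {a : ℕ → ℝ} (ha : ∀ n, 0 ≤ a n) : PreservesMaxMinorsNonneg (solve a) := by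
  -- `solve a` agrees on the rows `≤ N` with a product of `N` elementary bidiagonal matrices.
  let partialSolve (N : ℕ) (x : ℕ → ℝ) (n : ℕ) : ℝ := if n ≤ N then solve a x n else x n
  have hpartial : ∀ N, PreservesMaxMinorsNonneg (partialSolve N) := by
    intro N
    induction N with
    | zero =>
      have : partialSolve 0 = id := by
        ext x (_ | n) <;> simp [partialSolve, solve]
      exact this ▸ fun _ _ hv => hv
    | succ N ih =>
      have : partialSolve (N + 1) =
          lowerBidiag 1 (fun n => if n = N + 1 then a n else 0) ∘ partialSolve N := by
        ext x n
        simp only [partialSolve, lowerBidiag, Function.comp_apply, Pi.one_apply, one_mul]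
        rcases lt_trichotomy n (N + 1) with h | rfl | h
        · simp [h.ne, h.le, Nat.le_of_lt_succ h]
        · simp [solve]
        · simp [h.ne', show ¬ n ≤ N + 1 by omega, show ¬ n ≤ N by omega]
      rw [this]
      exact (preserves_lowerBidiag (fun _ => zero_le_one)
        fun n => by split_ifs <;> simp [ha]).comp ih
  intro s v hv f hf
  have hle : ∀ i, f i ≤ Finset.univ.sup f := fun i => Finset.le_sup (Finset.mem_univ i)
  simpa [partialSolve, hle] using hpartial (Finset.univ.sup f) s v hv f hf

theorem TotallyPos.map_columns {A : ℕ → ℕ → ℝ} (hA : TotallyPos A) {W : (ℕ → ℝ) → ℕ → ℝ}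
    (hW : PreservesMaxMinorsNonneg W) : TotallyPos fun n k => W (fun m => A m k) n :=
  fun s f g hf hg => hW s (fun j m => A m (g j)) (fun f' hf' => hA s f' g hf' hg) f hf

theorem maxMinorsNonneg_iterate_single_of_zero {L : (ℕ → ℝ) → ℕ → ℝ} (s : ℕ)
    (hs : ∀ f g : Fin s → ℕ, StrictMono f → StrictMono g →
      0 ≤ det (of fun i j => (L^[g j] (Pi.single 0 1)) (f i)))
    {g : Fin (s + 1) → ℕ} (hg : StrictMono g) (hg0 : g 0 = 0) :
    MaxMinorsNonneg fun j => L^[g j] (Pi.single 0 1) := by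
  intro f hf
  have hfpos : ∀ i, i ≠ 0 → f i ≠ 0 := fun i hi => (hf (Fin.pos_of_ne_zero hi)).ne_bot
  by_cases hf0 : f 0 = 0
  · rw [det_succ_column_zero, Fin.sum_univ_succ, Finset.sum_eq_zero fun i _ => by
      simp [hg0, hfpos i.succ (Fin.succ_ne_zero i)]]
    simpa [hg0, hf0, submatrix] using
      hs (fun i => f i.succ) (fun j => g j.succ) (hf.comp Fin.strictMono_succ)
        (hg.comp Fin.strictMono_succ)
  · refine (det_eq_zero_of_column_eq_zero 0 fun i => ?_).ge
    have : f i ≠ 0 := by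
      rcases eq_or_ne i 0 with rfl | hi
      exacts [hf0, hfpos i hi]
    simp [hg0, this]

theorem totallyPos_iterate_single {L : (ℕ → ℝ) → ℕ → ℝ} (hL : PreservesMaxMinorsNonneg L) :
    TotallyPos fun n k => (L^[k] (Pi.single 0 1)) n := by
  intro s
  induction s with
  | zero => intros; simp
  | succ s ih =>
    intro f g hf hg
    -- Peel `L^[g 0]` off every column and reduce to a first column `Pi.single 0 1`.
    let h : Fin (s + 1) → ℕ := fun j => g j - g 0
    have hgh : ∀ j, g j = g 0 + h j := fun j => by
      have := hg.monotone (Fin.zero_le j); simp only [h]; omega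
    have hh : StrictMono h := fun j j' hjj' => by
      have := hg hjj'; have := hg.monotone (Fin.zero_le j); simp only [h]; omega
    have := hL.iterate (g 0) _ _ (maxMinorsNonneg_iterate_single_of_zero s ih hh (by simp [h])) f hf
    simpa only [← Function.iterate_add_apply, ← hgh] using this

/-- The recurrence of the reversal `r n k = t n (n - k)` of an `n`-recursive matrix `t`. -/
structure IsReversedNRecursive (a b c : ℕ → ℝ) (r : ℕ → ℕ → ℝ) : Prop where
  zero_zero : r 0 0 = 1
  zero_succ : ∀ k, r 0 (k + 1) = 0
  succ_zero : ∀ n, r (n + 1) 0 = a (n + 1) * r n 0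
  one_succ : ∀ k, r 1 (k + 1) = a 1 * r 0 (k + 1) + b 1 * r 0 k
  succ_succ : ∀ n k, r (n + 2) (k + 1) =
    a (n + 2) * r (n + 1) (k + 1) + b (n + 2) * r (n + 1) k + c (n + 2) * r n k

namespace IsReversedNRecursive

variable {a b c : ℕ → ℝ} {r r' : ℕ → ℕ → ℝ}

theorem unique (hr : IsReversedNRecursive a b c r) (hr' : IsReversedNRecursive a b c r') :
    r = r' := by
  suffices ∀ n k, r n k = r' n k from funext₂ this
  intro n
  induction n using Nat.strong_induction_on with
  | _ n ih =>
    rintro (_ | k)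
    · rcases n with _ | n
      · rw [hr.zero_zero, hr'.zero_zero]
      · rw [hr.succ_zero, hr'.succ_zero, ih n (by omega)]
    · rcases n with _ | _ | n
      · rw [hr.zero_succ, hr'.zero_succ]
      · rw [hr.one_succ, hr'.one_succ, ih 0 (by omega), ih 0 (by omega)]
      · rw [hr.succ_succ, hr'.succ_succ, ih (n + 1) (by omega), ih (n + 1) (by omega),
          ih n (by omega)]

end IsReversedNRecursive

/-- Column `k` of the reversal is `solve a` applied to `(nRecursiveTransfer a b c)^[k] e₀`. -/
def nRecursiveTransfer (a b c : ℕ → ℝ) : (ℕ → ℝ) → ℕ → ℝ :=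
  lowerBidiag b c ∘ shift ∘ solve a

theorem preserves_nRecursiveTransfer {a b c : ℕ → ℝ} (ha : ∀ n, 0 ≤ a n) (hb : ∀ n, 0 ≤ b n)
    (hc : ∀ n, 0 ≤ c n) : PreservesMaxMinorsNonneg (nRecursiveTransfer a b c) :=
  (preserves_lowerBidiag hb hc).comp (preserves_shift.comp (preserves_solve ha))

theorem nRecursiveTransfer_apply_zero (a b c x : ℕ → ℝ) : nRecursiveTransfer a b c x 0 = 0 := by
  simp [nRecursiveTransfer, lowerBidiag, shift]

theorem nRecursiveTransfer_apply_one (a b c x : ℕ → ℝ) :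
    nRecursiveTransfer a b c x 1 = b 1 * solve a x 0 := by
  simp [nRecursiveTransfer, lowerBidiag, shift]

theorem nRecursiveTransfer_apply_add_two (a b c x : ℕ → ℝ) (n : ℕ) :
    nRecursiveTransfer a b c x (n + 2) = b (n + 2) * solve a x (n + 1) + c (n + 2) * solve a x n :=
  rfl

theorem isReversedNRecursive_solve_iterate (a b c : ℕ → ℝ) :
    IsReversedNRecursive a b c
      fun n k => solve a ((nRecursiveTransfer a b c)^[k] (Pi.single 0 1)) n where
  zero_zero := by simp [solve]
  zero_succ k := by rw [Function.iterate_succ_apply', solve, nRecursiveTransfer_apply_zero]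
  succ_zero n := by simp [solve]
  one_succ k := by
    rw [Function.iterate_succ_apply', solve.eq_2, nRecursiveTransfer_apply_one]
    ring
  succ_succ n k := by
    rw [Function.iterate_succ_apply', solve.eq_2, nRecursiveTransfer_apply_add_two]
    ring

theorem isReversedNRecursive_reversal {a b c : ℕ → ℝ} {T : ℕ → ℕ → ℝ}
    (h00 : T 0 0 = 1) (hz : ∀ n k, n < k → T n k = 0)
    (h10 : T 1 0 = b 1 * T 0 0)
    (h1k : ∀ k, T 1 (k + 1) = a 1 * T 0 k + b 1 * T 0 (k + 1))
    (hrec0 : ∀ n, T (n + 2) 0 = b (n + 2) * T (n + 1) 0)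
    (hrec : ∀ n k, T (n + 2) (k + 1) =
      a (n + 2) * T (n + 1) k + b (n + 2) * T (n + 1) (k + 1) + c (n + 2) * T n k) :
    IsReversedNRecursive a b c fun n k => if k ≤ n then T n (n - k) else 0 where
  zero_zero := by simpa using h00
  zero_succ k := by simp
  succ_zero n := by
    rcases n with _ | n
    · simp [h1k 0, h00, hz 0 1 one_pos]
    · simp [hrec n (n + 1), hz (n + 1) (n + 2) (by omega), hz n (n + 1) (by omega)]
  one_succ k := by
    rcases k with _ | k
    · simp [h10, h00]
    · simp
  succ_succ n k := by
    rcases lt_trichotomy k (n + 1) with hk | rfl | hk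
    · rw [if_pos (by omega), if_pos (by omega), if_pos (by omega), if_pos (by omega),
        show n + 2 - (k + 1) = n - k + 1 by omega, show n + 1 - (k + 1) = n - k by omega,
        show n + 1 - k = n - k + 1 by omega, hrec n (n - k)]
    · simp [hrec0 n]
    · simp [show ¬ k + 1 ≤ n + 2 by omega, show ¬ k + 1 ≤ n + 1 by omega,
        show ¬ k ≤ n + 1 by omega, show ¬ k ≤ n by omega]

/-- An `n`-recursive matrix `T` given by
`t_{n,k} = a_n t_{n−1,k−1} + b_n t_{n−1,k} + c_n t_{n−2,k−1}` with nonnegative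
coefficient sequences has totally positive reversal `[t_{n,n-k}]`. -/
theorem nRecursive_reversal_totallyPos (a b c : ℕ → ℝ) (T : ℕ → ℕ → ℝ)
    (ha : ∀ n, 0 ≤ a n) (hb : ∀ n, 0 ≤ b n) (hc : ∀ n, 0 ≤ c n)
    (h00 : T 0 0 = 1) (hz : ∀ n k, n < k → T n k = 0)
    (h10 : T 1 0 = b 1 * T 0 0)
    (h1k : ∀ k, T 1 (k + 1) = a 1 * T 0 k + b 1 * T 0 (k + 1))
    (hrec0 : ∀ n, T (n + 2) 0 = b (n + 2) * T (n + 1) 0)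
    (hrec : ∀ n k, T (n + 2) (k + 1) =
      a (n + 2) * T (n + 1) k + b (n + 2) * T (n + 1) (k + 1) + c (n + 2) * T n k) :
    TotallyPos (fun n k => if k ≤ n then T n (n - k) else 0) := by
  rw [(isReversedNRecursive_reversal h00 hz h10 h1k hrec0 hrec).unique
    (isReversedNRecursive_solve_iterate a b c)]
  exact (totallyPos_iterate_single (preserves_nRecursiveTransfer ha hb hc)).map_columns
    (preserves_solve ha)
end
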